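/- arXiv:2111.01509 — 5 statements merged into one kernel-verified Lean document; each statement's English description precedes it below -/
import Mathlib

section
/- Let $m \geq 1$, $e > 0$ a real number, and $\mathbf{e} = (e_1,\dots,e_m) \in \mathbb{Z}_{\geq 0}^m$. For $B > 3$ and $1 \leq \lambda \leq B$, define $S(B,\lambda) = \sum g_1^{e_1/e - 1}\cdots g_m^{e_m/e - 1}$, where the sum runs over tuples $(g_1,\dots,g_m) \in \mathbb{N}_{\geq 1}^m$ with $\prod_{i=1}^m g_i^{e_i} \leq B/\lambda$ and $\max_i g_i \leq B$. Then there is a constant $C$ depending only on $m, e, \mathbf{e}$ (not on $\lambda$) such that $S(B,\lambda) \leq C \max\big((\log B)^m, (B/\lambda)^{1/e} (\log B)^{m-1}\big)$. -/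
/-!
Write `S_n(N, X)` for the sum of `∏ gᵢ^(eᵢ/e - 1)` over `g ∈ [1, N]ⁿ` with `∏ gᵢ^eᵢ ≤ X`,
and `H = H_N` for the `N`-th harmonic number. Fixing the first coordinate `a` gives
`S_{n+1}(N, X) = ∑_{a^{e₁} ≤ X} a^(β - 1) S_n(N, X / a^{e₁})` with `β = e₁/e`, and by
induction `S_{n+1}(N, X) ≪ Hⁿ (H + X^(1/e))`: in the inductive bound, the term `H`
contributes `H ∑ a^(β - 1) ≪ H (H + X^(1/e))`, while `a^(β - 1) (X / a^{e₁})^(1/e) = X^(1/e) / a`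
contributes `X^(1/e) H`. The one-variable input is `∑_{a ≤ M} a^(β - 1) ≪ M^β` for `β > 0`,
by comparison with the telescoping sum of `a^β - (a - 1)^β` when `β ≤ 1`. Finally
`H_⌊B⌋ ≤ 1 + log B ≤ 2 log B`.
-/

open scoped Classical
open Finset Real

theorem harmonic_nonneg (N : ℕ) : 0 ≤ harmonic N := by
  rw [harmonic_eq_sum_Icc]
  positivity

theorem sum_Icc_inv_eq_harmonic (N : ℕ) : ∑ a ∈ Icc 1 N, (a : ℝ)⁻¹ = harmonic N := by
  simp [harmonic_eq_sum_Icc]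

theorem rpow_sub_one_le_sub_rpow_div {β x : ℝ} (hβ : 0 < β) (hβ1 : β ≤ 1) (hx : 1 ≤ x) :
    x ^ (β - 1) ≤ (x ^ β - (x - 1) ^ β) / β := by
  have hx0 : 0 < x := by linarith
  have hs : -1 ≤ -x⁻¹ := by simpa using inv_le_one_of_one_le₀ hx
  have bernoulli : (1 + -x⁻¹) ^ β ≤ 1 + β * -x⁻¹ :=
    rpow_one_add_le_one_add_mul_self hs hβ.le hβ1
  have hfactor : (x - 1) ^ β = x ^ β * (1 + -x⁻¹) ^ β := by
    rw [← mul_rpow hx0.le (by linarith)]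
    congr 1
    field_simp
    ring
  rw [le_div_iff₀ hβ, hfactor, rpow_sub_one hx0.ne']
  have := mul_le_mul_of_nonneg_left bernoulli (rpow_nonneg hx0.le β)
  field_simp at this ⊢
  linarith

theorem sum_Icc_rpow_sub_one_le {β : ℝ} (hβ : 0 < β) (M : ℕ) :
    ∑ a ∈ Icc 1 M, (a : ℝ) ^ (β - 1) ≤ (1 + β⁻¹) * (M : ℝ) ^ β := by
  rcases le_or_gt β 1 with hβ1 | hβ1
  · have telescope : ∑ a ∈ Icc 1 M, (a : ℝ) ^ (β - 1) ≤ β⁻¹ * (M : ℝ) ^ β := by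
      induction M with
      | zero => simp [zero_rpow hβ.ne']
      | succ k ih =>
        rw [sum_Icc_succ_top (by omega)]
        have := rpow_sub_one_le_sub_rpow_div hβ hβ1 (x := (k + 1 : ℕ)) (by simp)
        push_cast at this ⊢
        rw [add_sub_cancel_right, sub_div, div_eq_inv_mul, div_eq_inv_mul] at this
        linarith
    have : 0 ≤ (M : ℝ) ^ β := by positivity
    nlinarith
  · calc ∑ a ∈ Icc 1 M, (a : ℝ) ^ (β - 1) ≤ ∑ _a ∈ Icc 1 M, (M : ℝ) ^ (β - 1) := by
          gcongr with a ha
          exact (mem_Icc.1 ha).2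
      _ = (M : ℝ) ^ β := by
          rcases M.eq_zero_or_pos with rfl | hM
          · simp [zero_rpow (by linarith : β ≠ 0)]
          rw [sum_const, Nat.card_Icc, add_tsub_cancel_right, nsmul_eq_mul,
            ← rpow_one_add' (by positivity) (by linarith)]
          ring_nf
      _ ≤ (1 + β⁻¹) * (M : ℝ) ^ β := by
          have : 0 ≤ β⁻¹ * (M : ℝ) ^ β := by positivity
          linarith

-- For `k = 0` the constant is `1 + e / 0 = 1` and the sum is the harmonic number.
theorem sum_rpow_sub_one_filter_pow_le {e X : ℝ} (he : 0 < e) (hX : 0 ≤ X) (k N : ℕ) :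
    ∑ a ∈ (Icc 1 N).filter (fun a : ℕ => (a : ℝ) ^ k ≤ X), (a : ℝ) ^ ((k : ℝ) / e - 1)
      ≤ (1 + e / k) * (harmonic N + X ^ (1 / e)) := by
  have hH : (0 : ℝ) ≤ harmonic N := by exact_mod_cast harmonic_nonneg N
  have hY : 0 ≤ X ^ (1 / e) := by positivity
  rcases k.eq_zero_or_pos with rfl | hk
  · calc _ ≤ ∑ a ∈ Icc 1 N, (a : ℝ) ^ (((0 : ℕ) : ℝ) / e - 1) :=
          sum_le_sum_of_subset_of_nonneg (filter_subset _ _) fun _ _ _ => by positivity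
      _ = harmonic N := by simp [rpow_neg_one, sum_Icc_inv_eq_harmonic]
      _ ≤ _ := by simp only [Nat.cast_zero, div_zero, add_zero, one_mul]; linarith
  have hk' : (0 : ℝ) < k := by exact_mod_cast hk
  set M := ⌊X ^ (1 / (k : ℝ))⌋₊
  have hsub : (Icc 1 N).filter (fun a : ℕ => (a : ℝ) ^ k ≤ X) ⊆ Icc 1 M := by
    intro a ha
    simp only [mem_filter, mem_Icc] at ha ⊢
    refine ⟨ha.1.1, Nat.le_floor ?_⟩
    have := rpow_le_rpow (by positivity) ha.2 (by positivity : (0 : ℝ) ≤ (k : ℝ)⁻¹)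
    rwa [pow_rpow_inv_natCast (Nat.cast_nonneg a) hk.ne', ← one_div] at this
  have hM : (M : ℝ) ^ ((k : ℝ) / e) ≤ X ^ (1 / e) := by
    calc (M : ℝ) ^ ((k : ℝ) / e) ≤ (X ^ (1 / (k : ℝ))) ^ ((k : ℝ) / e) :=
          rpow_le_rpow (by positivity) (Nat.floor_le (by positivity)) (by positivity)
      _ = X ^ (1 / e) := by rw [← rpow_mul hX]; field_simp
  calc _ ≤ ∑ a ∈ Icc 1 M, (a : ℝ) ^ ((k : ℝ) / e - 1) :=
        sum_le_sum_of_subset_of_nonneg hsub fun _ _ _ => by positivity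
    _ ≤ (1 + ((k : ℝ) / e)⁻¹) * (M : ℝ) ^ ((k : ℝ) / e) :=
        sum_Icc_rpow_sub_one_le (by positivity) M
    _ ≤ (1 + e / k) * (harmonic N + X ^ (1 / e)) := by
        rw [inv_div]
        gcongr
        linarith

theorem sum_piFinset_const_succ {α M : Type*} [AddCommMonoid M] {n : ℕ} (s : Finset α)
    (f : (Fin (n + 1) → α) → M) :
    ∑ g ∈ Fintype.piFinset (fun _ => s), f g =
      ∑ a ∈ s, ∑ g ∈ Fintype.piFinset (fun _ => s), f (Fin.cons a g) := by
  have h := filter_piFinset_eq_map_consEquiv (fun _ : Fin (n + 1) => s) (fun _ => True)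
  simp only [filter_true] at h
  rw [h, sum_map, sum_product]
  rfl

-- The sum of the theorem is `weightSum e ev ⌊B⌋₊ (B / λ)`.
noncomputable def weightSum {n : ℕ} (e : ℝ) (ev : Fin n → ℕ) (N : ℕ) (X : ℝ) : ℝ :=
  ∑ g ∈ (Fintype.piFinset fun _ : Fin n => Icc 1 N).filter
      (fun g => (∏ i, ((g i : ℝ)) ^ (ev i)) ≤ X),
    ∏ i, (g i : ℝ) ^ ((ev i : ℝ) / e - 1)

section weightSum

variable {n : ℕ} {e : ℝ} {N : ℕ}

theorem weightSum_eq_zero_of_lt_one (ev : Fin n → ℕ) {X : ℝ} (hX : X < 1) :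
    weightSum e ev N X = 0 := by
  refine sum_eq_zero fun g hg => ?_
  simp only [mem_filter, Fintype.mem_piFinset, mem_Icc] at hg
  have : 1 ≤ ∏ i, ((g i : ℝ)) ^ (ev i) :=
    one_le_prod fun i _ => one_le_pow₀ (by exact_mod_cast (hg.1 i).1)
  linarith [hg.2]

theorem weightSum_zero_le_one (ev : Fin 0 → ℕ) (X : ℝ) : weightSum e ev N X ≤ 1 := by
  unfold weightSum
  simp only [univ_eq_empty, prod_empty, sum_const, nsmul_eq_mul, mul_one]
  exact_mod_cast (card_filter_le _ _).trans (by simp)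

theorem weightSum_succ (ev : Fin (n + 1) → ℕ) (X : ℝ) :
    weightSum e ev N X = ∑ a ∈ Icc 1 N,
      (a : ℝ) ^ ((ev 0 : ℝ) / e - 1) * weightSum e (Fin.tail ev) N (X / (a : ℝ) ^ ev 0) := by
  unfold weightSum
  rw [sum_filter, sum_piFinset_const_succ]
  refine sum_congr rfl fun a ha => ?_
  have ha : (0 : ℝ) < (a : ℝ) ^ ev 0 := pow_pos (by exact_mod_cast (mem_Icc.1 ha).1) _
  rw [sum_filter, mul_sum]
  refine sum_congr rfl fun g _ => ?_
  simp only [Fin.prod_univ_succ, Fin.cons_zero, Fin.cons_succ, Fin.tail, le_div_iff₀' ha,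
    mul_ite, mul_zero]

theorem weightSum_succ_le (ev : Fin (n + 1) → ℕ) {F : ℝ → ℝ}
    (hF : ∀ Y, 1 ≤ Y → weightSum e (Fin.tail ev) N Y ≤ F Y) (X : ℝ) :
    weightSum e ev N X ≤ ∑ a ∈ (Icc 1 N).filter (fun a : ℕ => (a : ℝ) ^ ev 0 ≤ X),
      (a : ℝ) ^ ((ev 0 : ℝ) / e - 1) * F (X / (a : ℝ) ^ ev 0) := by
  rw [weightSum_succ, sum_filter]
  refine sum_le_sum fun a ha => ?_
  have ha : (0 : ℝ) < (a : ℝ) ^ ev 0 := pow_pos (by exact_mod_cast (mem_Icc.1 ha).1) _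
  split_ifs with hX
  · exact mul_le_mul_of_nonneg_left (hF _ ((one_le_div ha).2 hX)) (by positivity)
  · rw [weightSum_eq_zero_of_lt_one _ ((div_lt_one ha).2 (not_le.1 hX)), mul_zero]

theorem exists_weightSum_le (he : 0 < e) (ev : Fin (n + 1) → ℕ) :
    ∃ C > 0, ∀ N X, 1 ≤ X →
      weightSum e ev N X ≤ C * harmonic N ^ n * (harmonic N + X ^ (1 / e)) := by
  induction n with
  | zero =>
    refine ⟨1 + e / ev 0, by positivity, fun N X hX => ?_⟩
    calc weightSum e ev N X
        ≤ ∑ a ∈ (Icc 1 N).filter (fun a : ℕ => (a : ℝ) ^ ev 0 ≤ X),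
            (a : ℝ) ^ ((ev 0 : ℝ) / e - 1) * 1 :=
          weightSum_succ_le ev (fun Y _ => weightSum_zero_le_one _ Y) X
      _ ≤ _ := by
          simpa using sum_rpow_sub_one_filter_pow_le he (by linarith) (ev 0) N
  | succ n ih =>
    obtain ⟨C, hC, hbound⟩ := ih (Fin.tail ev)
    refine ⟨(2 + e / ev 0) * C, by positivity, fun N X hX => ?_⟩
    have hH : (0 : ℝ) ≤ harmonic N := by exact_mod_cast harmonic_nonneg N
    set H : ℝ := (harmonic N : ℝ)
    set Y := X ^ (1 / e)
    have hY : 0 ≤ Y := by positivity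
    have hsplit : ∀ a ∈ (Icc 1 N).filter (fun a : ℕ => (a : ℝ) ^ ev 0 ≤ X),
        (a : ℝ) ^ ((ev 0 : ℝ) / e - 1) * (C * H ^ n * (H + (X / (a : ℝ) ^ ev 0) ^ (1 / e))) =
          C * H ^ n * H * (a : ℝ) ^ ((ev 0 : ℝ) / e - 1) + C * H ^ n * Y * (a : ℝ)⁻¹ := by
      intro a ha
      have ha : (0 : ℝ) < a := by exact_mod_cast (mem_Icc.1 (mem_filter.1 ha).1).1
      rw [div_rpow (by linarith) (by positivity), ← rpow_natCast (a : ℝ) (ev 0),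
        ← rpow_mul ha.le, rpow_sub_one ha.ne']
      field_simp
      ring
    calc weightSum e ev N X
        ≤ ∑ a ∈ (Icc 1 N).filter (fun a : ℕ => (a : ℝ) ^ ev 0 ≤ X),
            (a : ℝ) ^ ((ev 0 : ℝ) / e - 1) *
              (C * H ^ n * (H + (X / (a : ℝ) ^ ev 0) ^ (1 / e))) :=
          weightSum_succ_le ev (hbound N) X
      _ = C * H ^ n * H * ∑ a ∈ (Icc 1 N).filter (fun a : ℕ => (a : ℝ) ^ ev 0 ≤ X),
              (a : ℝ) ^ ((ev 0 : ℝ) / e - 1) +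
            C * H ^ n * Y * ∑ a ∈ (Icc 1 N).filter (fun a : ℕ => (a : ℝ) ^ ev 0 ≤ X),
              (a : ℝ)⁻¹ := by
          rw [sum_congr rfl hsplit, sum_add_distrib, mul_sum, mul_sum]
      _ ≤ C * H ^ n * H * ((1 + e / ev 0) * (H + Y)) + C * H ^ n * Y * H := by
          gcongr
          · exact sum_rpow_sub_one_filter_pow_le he (by linarith) (ev 0) N
          · exact (sum_le_sum_of_subset_of_nonneg (filter_subset _ _) fun _ _ _ => by
              positivity).trans (sum_Icc_inv_eq_harmonic N).le
      _ ≤ (2 + e / ev 0) * C * H ^ (n + 1) * (H + Y) := by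
          rw [pow_succ]
          have : 0 ≤ C * H ^ n * H := by positivity
          nlinarith [mul_nonneg this hY]

end weightSum

/-- Multivariate summation lemma (Salberger's sublemma, with the extra parameter `λ`):
the sum of `∏ gᵢ^(eᵢ/e - 1)` over positive integer tuples with `∏ gᵢ^{eᵢ} ≤ B/λ` and
`max gᵢ ≤ B` is `O(max((log B)^m, (B/λ)^{1/e} (log B)^{m-1}))`, uniformly in `λ ∈ [1,B]`. -/
theorem stmt_0 (m : ℕ) (hm : 1 ≤ m) (e : ℝ) (he : 0 < e) (ev : Fin m → ℕ) :
    ∃ C : ℝ, 0 < C ∧ ∀ B lam : ℝ, 3 < B → 1 ≤ lam → lam ≤ B →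
      (∑ g ∈ (Fintype.piFinset fun _ : Fin m => Finset.Icc 1 ⌊B⌋₊).filter
          (fun g => (∏ i, ((g i : ℝ)) ^ (ev i)) ≤ B / lam),
        ∏ i, (g i : ℝ) ^ ((ev i : ℝ) / e - 1))
      ≤ C * max ((Real.log B) ^ m) ((B / lam) ^ (1 / e) * (Real.log B) ^ (m - 1)) := by
  obtain ⟨n, rfl⟩ : ∃ n, m = n + 1 := ⟨m - 1, by omega⟩
  obtain ⟨C, hC, hbound⟩ := exists_weightSum_le he ev
  refine ⟨2 ^ (n + 2) * C, by positivity, fun B lam hB hlam hlamB => ?_⟩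
  have hX : 1 ≤ B / lam := (one_le_div (by linarith)).2 hlamB
  have hL : 1 < log B := by
    rw [lt_log_iff_exp_lt (by linarith)]
    linarith [exp_one_lt_d9]
  have hH : (harmonic ⌊B⌋₊ : ℝ) ≤ 2 * log B :=
    (harmonic_floor_le_one_add_log B (by linarith)).trans (by linarith)
  have hH0 : (0 : ℝ) ≤ harmonic ⌊B⌋₊ := by exact_mod_cast harmonic_nonneg _
  set L := log B
  set Y := (B / lam) ^ (1 / e)
  have hY : 0 ≤ Y := by positivity
  calc weightSum e ev ⌊B⌋₊ (B / lam)
      ≤ C * (harmonic ⌊B⌋₊ : ℝ) ^ n * (harmonic ⌊B⌋₊ + Y) := hbound _ _ hX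
    _ ≤ C * (2 * L) ^ n * (2 * L + Y) := by gcongr
    _ ≤ 2 ^ n * C * (2 * (L ^ (n + 1) + Y * L ^ n)) := by
        rw [mul_pow, pow_succ]
        have : 0 ≤ 2 ^ n * C * L ^ n * Y := by positivity
        nlinarith
    _ ≤ 2 ^ (n + 2) * C * max (L ^ (n + 1)) (Y * L ^ (n + 1 - 1)) := by
        rw [add_tsub_cancel_right, show 2 ^ (n + 2) * C * max (L ^ (n + 1)) (Y * L ^ n) =
          2 ^ n * C * (2 * (2 * max (L ^ (n + 1)) (Y * L ^ n))) by ring]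
        gcongr
        linarith [le_max_left (L ^ (n + 1)) (Y * L ^ n), le_max_right (L ^ (n + 1)) (Y * L ^ n)]
end

section
/- Let $m \geq 1$, $e > 0$, $\mathbf{e} = (e_1,\dots,e_m) \in \mathbb{Z}_{\geq 0}^m$, $B > 3$, and $1 \leq \lambda \leq B$. Define $R(B,\lambda) = \int \prod_{i=1}^m g_i^{e_i/e - 1}\, dg_1\cdots dg_m$, the integral over real tuples $(g_1,\dots,g_m) \in [1,\infty)^m$ satisfying $\prod_{i=1}^m g_i^{e_i} \leq B/\lambda$ and $\max_i g_i \leq B$. Then $R(B,\lambda) = O_{m,e,\mathbf{e}}\big(\max((\log B)^m, (B/\lambda)^{1/e}(\log B)^{m-1})\big)$, with implied constant independent of $\lambda$. -/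
/-!
On the region the weight equals `(∏ gᵢ ^ eᵢ) ^ (1/e) * ∏ gᵢ⁻¹`. If every `eᵢ` vanishes this is
`∏ gᵢ⁻¹`, whose integral over `[1, B]^m` is `(log B)^m`. Otherwise pick `i` with `eᵢ ≥ 1` and
integrate in `gᵢ` first: for fixed other coordinates `y`, with `P = ∏_{j ≠ i} y_j ^ e_j`, the
integral of `(gᵢ^eᵢ P)^(1/e) / gᵢ` over `gᵢ ≥ 1, gᵢ^eᵢ P ≤ B/λ` is at most `(e/eᵢ) (B/λ)^(1/e)`,
independently of `y`, and the remaining factor `∏ y_j⁻¹` integrates to `(log B)^(m-1)`.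
-/

open Finset Real MeasureTheory

lemma indicator_Icc_one_inv_nonneg (B t : ℝ) : 0 ≤ (Set.Icc 1 B).indicator (fun t => t⁻¹) t :=
  Set.indicator_nonneg (fun _ ht => inv_nonneg.2 (zero_le_one.trans ht.1)) t

lemma integral_Icc_one_inv {B : ℝ} (hB : 1 ≤ B) : ∫ t in Set.Icc 1 B, t⁻¹ = log B := by
  rw [integral_Icc_eq_integral_Ioc, ← intervalIntegral.integral_of_le hB,
    integral_inv_of_pos one_pos (by linarith), div_one]

lemma integrableOn_Icc_one_inv (B : ℝ) : IntegrableOn (fun t : ℝ => t⁻¹) (Set.Icc 1 B) :=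
  (continuousOn_inv₀.mono fun _ ht => (zero_lt_one.trans_le ht.1).ne').integrableOn_compact
    isCompact_Icc

lemma lintegral_prod_indicator_Icc_one_inv {ι : Type*} [Fintype ι] {B : ℝ} (hB : 1 ≤ B) :
    ∫⁻ y : ι → ℝ, ENNReal.ofReal (∏ j, (Set.Icc 1 B).indicator (fun t => t⁻¹) (y j))
      = ENNReal.ofReal (log B ^ Fintype.card ι) := by
  have hint : ∀ _ : ι, Integrable ((Set.Icc 1 B).indicator fun t : ℝ => t⁻¹) :=
    fun _ => (integrableOn_Icc_one_inv B).integrable_indicator measurableSet_Icc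
  rw [volume_pi, ← ofReal_integral_eq_lintegral_ofReal (Integrable.fintype_prod hint)
    (.of_forall fun y => prod_nonneg fun j _ => indicator_Icc_one_inv_nonneg B (y j)),
    integral_fintype_prod_eq_prod, integral_indicator measurableSet_Icc,
    integral_Icc_one_inv hB, prod_const, card_univ]

lemma lintegral_Icc_one_rpow_sub_one_le {c : ℝ} (hc : 0 < c) (X : ℝ) :
    ∫⁻ t in Set.Icc 1 X, ENNReal.ofReal (t ^ (c - 1)) ≤ ENNReal.ofReal (X ^ c / c) := by
  rcases lt_or_ge X 1 with hX | hX
  · simp [Set.Icc_eq_empty_of_lt hX]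
  rw [← ofReal_integral_eq_lintegral_ofReal]
  · apply ENNReal.ofReal_le_ofReal
    rw [integral_Icc_eq_integral_Ioc, ← intervalIntegral.integral_of_le hX,
      integral_rpow (Or.inl (by linarith)), sub_add_cancel, one_rpow]
    gcongr
    linarith
  · exact (continuousOn_id.rpow_const fun t ht =>
      Or.inl (zero_lt_one.trans_le ht.1).ne').integrableOn_compact isCompact_Icc
  · exact ae_restrict_of_forall_mem measurableSet_Icc fun t ht =>
      rpow_nonneg (zero_le_one.trans ht.1) _

lemma lintegral_eq_lintegral_insertNth {α : Type*} [MeasureSpace α]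
    [SigmaFinite (volume : Measure α)] {n : ℕ} (i : Fin (n + 1))
    {f : (Fin (n + 1) → α) → ENNReal} (hf : Measurable f) :
    ∫⁻ g, f g = ∫⁻ y : Fin n → α, ∫⁻ x, f (i.insertNth x y) := by
  have hmp := (volume_preserving_piFinSuccAbove (fun _ : Fin (n + 1) => α) i).symm
  rw [← hmp.lintegral_comp hf, Measure.volume_eq_prod]
  exact lintegral_prod_symm _ (hf.comp (MeasurableEquiv.measurable _)).aemeasurable

lemma setLIntegral_rpow_mul_inv_le {a : ℕ} (ha : a ≠ 0) {e : ℝ} (he : 0 < e) {P L : ℝ}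
    (hP : 0 < P) (hL : 0 ≤ L) :
    ∫⁻ x in {x : ℝ | 1 ≤ x ∧ x ^ a * P ≤ L}, ENNReal.ofReal ((x ^ a * P) ^ (1 / e) * x⁻¹)
      ≤ ENNReal.ofReal (e / a * L ^ (1 / e)) := by
  have ha' : (0 : ℝ) < a := Nat.cast_pos.2 (Nat.pos_of_ne_zero ha)
  set X : ℝ := (L / P) ^ (a : ℝ)⁻¹
  have hsub : {x : ℝ | 1 ≤ x ∧ x ^ a * P ≤ L} ⊆ Set.Icc 1 X := fun x ⟨hx1, hxL⟩ =>
    ⟨hx1, (le_rpow_inv_iff_of_pos (by linarith) (by positivity) ha').2 <| by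
      rw [rpow_natCast, le_div_iff₀ hP]; exact hxL⟩
  have hintegrand : ∀ x ∈ Set.Icc (1 : ℝ) X,
      ENNReal.ofReal ((x ^ a * P) ^ (1 / e) * x⁻¹)
        = ENNReal.ofReal (P ^ (1 / e)) * ENNReal.ofReal (x ^ (a / e - 1 : ℝ)) := fun x hx => by
    have hx : 0 < x := zero_lt_one.trans_le hx.1
    rw [← ENNReal.ofReal_mul (by positivity), mul_rpow (by positivity) hP.le, ← rpow_natCast,
      ← rpow_mul hx.le, rpow_sub_one hx.ne']
    ring_nf
  have hXc : X ^ (a / e : ℝ) = L ^ (1 / e) / P ^ (1 / e) := by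
    rw [← rpow_mul (by positivity), ← div_rpow hL hP.le]
    congr 1
    field_simp
  calc ∫⁻ x in {x : ℝ | 1 ≤ x ∧ x ^ a * P ≤ L}, ENNReal.ofReal ((x ^ a * P) ^ (1 / e) * x⁻¹)
      ≤ ∫⁻ x in Set.Icc 1 X, ENNReal.ofReal ((x ^ a * P) ^ (1 / e) * x⁻¹) :=
        lintegral_mono_set hsub
    _ = ENNReal.ofReal (P ^ (1 / e))
          * ∫⁻ x in Set.Icc 1 X, ENNReal.ofReal (x ^ (a / e - 1 : ℝ)) := by
        rw [setLIntegral_congr_fun measurableSet_Icc hintegrand,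
          lintegral_const_mul' _ _ ENNReal.ofReal_ne_top]
    _ ≤ ENNReal.ofReal (P ^ (1 / e)) * ENNReal.ofReal (X ^ (a / e : ℝ) / (a / e)) := by
        gcongr
        exact lintegral_Icc_one_rpow_sub_one_le (by positivity) X
    _ = ENNReal.ofReal (e / a * L ^ (1 / e)) := by
        rw [← ENNReal.ofReal_mul (by positivity), hXc]
        congr 1
        field_simp

section MonomialRegion

variable {ι : Type*} [Fintype ι]

noncomputable def monomialWeight (e : ℝ) (ev : ι → ℕ) (g : ι → ℝ) : ℝ :=
  ∏ i, g i ^ ((ev i : ℝ) / e - 1)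

def monomialRegion (ev : ι → ℕ) (B L : ℝ) : Set (ι → ℝ) :=
  {g | (∀ i, 1 ≤ g i) ∧ ∏ i, g i ^ ev i ≤ L ∧ ∀ i, g i ≤ B}

lemma measurableSet_monomialRegion (ev : ι → ℕ) (B L : ℝ) :
    MeasurableSet (monomialRegion ev B L) := by
  unfold monomialRegion
  measurability

lemma measurable_monomialWeight (e : ℝ) (ev : ι → ℕ) : Measurable (monomialWeight e ev) := by
  unfold monomialWeight; fun_prop

lemma monomialWeight_nonneg_of_mem {e : ℝ} {ev : ι → ℕ} {B L : ℝ} {g : ι → ℝ}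
    (hg : g ∈ monomialRegion ev B L) : 0 ≤ monomialWeight e ev g :=
  prod_nonneg fun i _ => rpow_nonneg (zero_le_one.trans (hg.1 i)) _

lemma monomialWeight_eq (e : ℝ) (ev : ι → ℕ) {g : ι → ℝ} (hg : ∀ i, 0 < g i) :
    monomialWeight e ev g = (∏ i, g i ^ ev i) ^ (1 / e) * ∏ i, (g i)⁻¹ := by
  rw [← finsetProd_rpow _ _ fun i _ => pow_nonneg (hg i).le _, ← prod_mul_distrib]
  refine prod_congr rfl fun i _ => ?_
  rw [rpow_sub (hg i), rpow_one, ← rpow_natCast, ← rpow_mul (hg i).le, mul_one_div, div_eq_mul_inv]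

lemma monomialWeight_eq_prod_indicator {e : ℝ} {ev : ι → ℕ} {B L : ℝ} {g : ι → ℝ}
    (hg : g ∈ monomialRegion ev B L) :
    monomialWeight e ev g =
      (∏ i, g i ^ ev i) ^ (1 / e) * ∏ i, (Set.Icc 1 B).indicator (fun t => t⁻¹) (g i) := by
  rw [monomialWeight_eq e ev fun i => zero_lt_one.trans_le (hg.1 i)]
  congr 1
  exact prod_congr rfl fun i _ => (Set.indicator_of_mem (Set.mem_Icc.2 ⟨hg.1 i, hg.2.2 i⟩) _).symm

lemma setLIntegral_monomialWeight_le_of_forall_eq_zero (e : ℝ) {ev : ι → ℕ}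
    (hev : ∀ i, ev i = 0) {B : ℝ} (hB : 1 ≤ B) (L : ℝ) :
    ∫⁻ g in monomialRegion ev B L, ENNReal.ofReal (monomialWeight e ev g)
      ≤ ENNReal.ofReal (log B ^ Fintype.card ι) := by
  calc ∫⁻ g in monomialRegion ev B L, ENNReal.ofReal (monomialWeight e ev g)
      = ∫⁻ g in monomialRegion ev B L,
          ENNReal.ofReal (∏ i, (Set.Icc 1 B).indicator (fun t => t⁻¹) (g i)) := by
        refine setLIntegral_congr_fun (measurableSet_monomialRegion ev B L) fun g hg => ?_
        simp [monomialWeight_eq_prod_indicator hg, hev]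
    _ ≤ _ := setLIntegral_le_lintegral _ _
    _ = _ := lintegral_prod_indicator_Icc_one_inv hB

end MonomialRegion

section FinSucc

variable {n : ℕ} {e : ℝ} {ev : Fin (n + 1) → ℕ} {i : Fin (n + 1)} {B L : ℝ}

lemma lintegral_indicator_monomialRegion_insertNth_le (he : 0 < e) (hi : ev i ≠ 0) (hL : 0 ≤ L)
    (y : Fin n → ℝ) :
    ∫⁻ x, (monomialRegion ev B L).indicator
        (fun g => ENNReal.ofReal (monomialWeight e ev g)) (i.insertNth x y)
      ≤ ENNReal.ofReal (∏ j, (Set.Icc 1 B).indicator (fun t => t⁻¹) (y j))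
        * ENNReal.ofReal (e / ev i * L ^ (1 / e)) := by
  set P := ∏ j, y j ^ ev (i.succAbove j)
  set T := {x : ℝ | 1 ≤ x ∧ x ^ ev i * P ≤ L}
  have hT : MeasurableSet T := by simp only [T]; measurability
  have hslice : ∀ x, (monomialRegion ev B L).indicator
        (fun g => ENNReal.ofReal (monomialWeight e ev g)) (i.insertNth x y)
      ≤ ENNReal.ofReal (∏ j, (Set.Icc 1 B).indicator (fun t => t⁻¹) (y j))
        * T.indicator (fun x => ENNReal.ofReal ((x ^ ev i * P) ^ (1 / e) * x⁻¹)) x := by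
    intro x
    by_cases hg : i.insertNth x y ∈ monomialRegion ev B L
    · have hx : x ∈ Set.Icc 1 B := by simpa using And.intro (hg.1 i) (hg.2.2 i)
      have hprod : ∏ k, i.insertNth x y k ^ ev k = x ^ ev i * P := by
        simp [Fin.prod_univ_succAbove _ i, P]
      have hxT : x ∈ T := ⟨hx.1, hprod ▸ hg.2.1⟩
      rw [Set.indicator_of_mem hg, Set.indicator_of_mem hxT,
        ← ENNReal.ofReal_mul (prod_nonneg fun j _ => indicator_Icc_one_inv_nonneg B (y j)),
        monomialWeight_eq_prod_indicator hg, hprod, Fin.prod_univ_succAbove _ i]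
      refine le_of_eq (congrArg ENNReal.ofReal ?_)
      simp only [Fin.insertNth_apply_same, Fin.insertNth_apply_succAbove, Set.indicator_of_mem hx]
      ring
    · rw [Set.indicator_of_notMem hg]
      exact zero_le
  calc ∫⁻ x, (monomialRegion ev B L).indicator
          (fun g => ENNReal.ofReal (monomialWeight e ev g)) (i.insertNth x y)
      ≤ ∫⁻ x, ENNReal.ofReal (∏ j, (Set.Icc 1 B).indicator (fun t => t⁻¹) (y j))
          * T.indicator (fun x => ENNReal.ofReal ((x ^ ev i * P) ^ (1 / e) * x⁻¹)) x :=
        lintegral_mono hslice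
    _ = ENNReal.ofReal (∏ j, (Set.Icc 1 B).indicator (fun t => t⁻¹) (y j))
          * ∫⁻ x in T, ENNReal.ofReal ((x ^ ev i * P) ^ (1 / e) * x⁻¹) := by
        rw [lintegral_const_mul' _ _ ENNReal.ofReal_ne_top, lintegral_indicator hT]
    _ ≤ _ := by
        by_cases hy : ∀ j, y j ∈ Set.Icc 1 B
        · gcongr
          exact setLIntegral_rpow_mul_inv_le hi he
            (prod_pos fun j _ => pow_pos (zero_lt_one.trans_le (hy j).1) _) hL
        · obtain ⟨j, hj⟩ := not_forall.1 hy
          rw [prod_eq_zero (mem_univ j) (Set.indicator_of_notMem hj _)]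
          simp

lemma setLIntegral_monomialWeight_le (he : 0 < e) (hi : ev i ≠ 0) (hB : 1 ≤ B) (hL : 0 ≤ L) :
    ∫⁻ g in monomialRegion ev B L, ENNReal.ofReal (monomialWeight e ev g)
      ≤ ENNReal.ofReal (e / ev i * (L ^ (1 / e) * log B ^ n)) := by
  rw [← lintegral_indicator (measurableSet_monomialRegion ev B L),
    lintegral_eq_lintegral_insertNth i (((measurable_monomialWeight e ev).ennreal_ofReal).indicator
      (measurableSet_monomialRegion ev B L))]
  calc _ ≤ ∫⁻ y : Fin n → ℝ, ENNReal.ofReal (∏ j, (Set.Icc 1 B).indicator (fun t => t⁻¹) (y j))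
          * ENNReal.ofReal (e / ev i * L ^ (1 / e)) :=
        lintegral_mono fun y => lintegral_indicator_monomialRegion_insertNth_le he hi hL y
    _ = ENNReal.ofReal (log B ^ n) * ENNReal.ofReal (e / ev i * L ^ (1 / e)) := by
        rw [lintegral_mul_const _ (by measurability), lintegral_prod_indicator_Icc_one_inv hB,
          Fintype.card_fin]
    _ = _ := by
        rw [← ENNReal.ofReal_mul (pow_nonneg (log_nonneg hB) _)]
        ring_nf

end FinSucc

lemma setIntegral_monomialWeight_le {ι : Type*} [Fintype ι] {e : ℝ} {ev : ι → ℕ} {B L C : ℝ}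
    (hC : 0 ≤ C)
    (h : ∫⁻ g in monomialRegion ev B L, ENNReal.ofReal (monomialWeight e ev g) ≤ ENNReal.ofReal C) :
    ∫ g in monomialRegion ev B L, monomialWeight e ev g ≤ C := by
  rw [integral_eq_lintegral_of_nonneg_ae
    (ae_restrict_of_forall_mem (measurableSet_monomialRegion ev B L)
      fun _ hg => monomialWeight_nonneg_of_mem hg)
    (measurable_monomialWeight e ev).aestronglyMeasurable]
  exact ENNReal.toReal_le_of_le_ofReal hC h

theorem stmt_1_general (m : ℕ) (e : ℝ) (he : 0 < e) (ev : Fin m → ℕ) :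
    ∃ C : ℝ, 0 < C ∧ ∀ B lam : ℝ, 3 < B → 1 ≤ lam → lam ≤ B →
      (∫ g in {g : Fin m → ℝ | (∀ i, 1 ≤ g i) ∧ (∏ i, (g i) ^ (ev i)) ≤ B / lam ∧
          ∀ i, g i ≤ B}, ∏ i, (g i) ^ ((ev i : ℝ) / e - 1))
      ≤ C * max ((Real.log B) ^ m) ((B / lam) ^ (1 / e) * (Real.log B) ^ (m - 1)) := by
  refine ⟨e + 1, by linarith, fun B lam hB hlam _ => ?_⟩
  have hB1 : 1 ≤ B := by linarith
  have hlogB : 0 ≤ log B := log_nonneg hB1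
  have hL : 0 ≤ B / lam := div_nonneg (by linarith) (by linarith)
  have hmax : 0 ≤ max (log B ^ m) ((B / lam) ^ (1 / e) * log B ^ (m - 1)) :=
    (pow_nonneg hlogB m).trans (le_max_left _ _)
  refine setIntegral_monomialWeight_le (by positivity) ?_
  by_cases hev : ∀ i, ev i = 0
  · refine (setLIntegral_monomialWeight_le_of_forall_eq_zero e hev hB1 _).trans
      (ENNReal.ofReal_le_ofReal ?_)
    rw [Fintype.card_fin]
    exact (le_max_left _ _).trans (le_mul_of_one_le_left hmax (by linarith))
  · obtain ⟨i, hi⟩ := not_forall.1 hev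
    obtain ⟨n, rfl⟩ := Nat.exists_eq_add_one_of_ne_zero i.pos.ne'
    refine (setLIntegral_monomialWeight_le he hi hB1 hL).trans (ENNReal.ofReal_le_ofReal ?_)
    have hcoef : e / ev i ≤ e + 1 :=
      (div_le_self he.le (Nat.one_le_cast.2 (Nat.one_le_iff_ne_zero.2 hi))).trans (by linarith)
    rw [Nat.add_sub_cancel] at hmax ⊢
    exact mul_le_mul hcoef (le_max_right _ _) (by positivity) (by linarith)

/-- Integral version of the multivariate summation lemma: the integral of
`∏ gᵢ^(eᵢ/e - 1)` over real tuples in `[1,∞)^m` with `∏ gᵢ^{eᵢ} ≤ B/λ` and `max gᵢ ≤ B`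
is `O(max((log B)^m, (B/λ)^{1/e} (log B)^{m-1}))`, uniformly in `λ ∈ [1,B]`. -/
theorem stmt_1 (m : ℕ) (hm : 1 ≤ m) (e : ℝ) (he : 0 < e) (ev : Fin m → ℕ) :
    ∃ C : ℝ, 0 < C ∧ ∀ B lam : ℝ, 3 < B → 1 ≤ lam → lam ≤ B →
      (∫ g in {g : Fin m → ℝ | (∀ i, 1 ≤ g i) ∧ (∏ i, (g i) ^ (ev i)) ≤ B / lam ∧
          ∀ i, g i ≤ B}, ∏ i, (g i) ^ ((ev i : ℝ) / e - 1))
      ≤ C * max ((Real.log B) ^ m) ((B / lam) ^ (1 / e) * (Real.log B) ^ (m - 1)) :=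
  stmt_1_general m e he ev
end

section
/- Let $r \geq 2$, let $a_1,\dots,a_r \in \mathbb{Z}_{\geq 0}$, fix $i_0 \in \{1,\dots,r\}$, and let $\eta: \mathbb{N}_{\geq 1}^{r-1} \to \mathbb{N}_{\geq 1}$ be an arbitrary function (possibly depending on $B$). For $B > 2$ define $\mathcal{N}(B) = \sum \prod_{i=1}^r X_i^{a_i - 1}$, the sum over tuples $(X_1,\dots,X_r) \in \mathbb{N}_{\geq 1}^r$ with $\prod_{i=1}^r X_i^{a_i} \leq B$, $\max_i X_i \leq B$, and $X_{i_0} = \eta(X_i, i \neq i_0)$. Then $\mathcal{N}(B) = O(B (\log B)^{r-2})$, with implied constant depending only on $r$ and the $a_i$ but not on $\eta$. -/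
/-!
Each choice of the coordinates `t = (X_i)_{i ≠ i₀}` contributes at most one term, because
`X_{i₀} = η t`. With `P = ∏_{i ≠ i₀} t_i^{a_i}` and `s = 1 / (a_{i₀} + 1)`, the constraints
`X_{i₀}^{a_{i₀}} P ≤ B` and `X_{i₀} ≥ 1` bound that term by `B^{1-s} ∏ t_i^{s a_i - 1}` and force
`∏ t_i^{s a_i} ≤ B^s`, which no longer involves `η`. If some `a_j` with `j ≠ i₀` is positive,
summing over `t_j` first gives `∑_{n^c ≤ M} n^{c-1} = O(M)`, which turns `B^{1-s}` into `B`, and the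
remaining `r - 2` coordinates give harmonic sums, `O((log B)^{r-2})`. If all these `a_j` vanish,
the `r - 1` harmonic sums give `B^{1-s} (log B)^{r-1}`, and `log B = O(B^s)` absorbs one logarithm.
-/

open scoped Classical
open Finset Real

lemma rpow_sub_one_le_rpow_sub_rpow {c x : ℝ} (hc : 1 ≤ c) (hx : 0 ≤ x) :
    (x + 1) ^ (c - 1) ≤ (x + 1) ^ c - x ^ c := by
  have hsplit : ∀ y : ℝ, 0 ≤ y → y ^ c = y * y ^ (c - 1) := fun y hy => by
    rw [← Real.rpow_one_add' hy (by linarith), add_sub_cancel]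
  have hmono : x ^ (c - 1) ≤ (x + 1) ^ (c - 1) :=
    Real.rpow_le_rpow hx (by linarith) (by linarith)
  rw [hsplit x hx, hsplit (x + 1) (by linarith)]
  nlinarith

lemma mul_rpow_sub_one_le_rpow_sub_rpow {c x : ℝ} (hc₀ : 0 ≤ c) (hc₁ : c ≤ 1) (hx : 0 ≤ x) :
    c * (x + 1) ^ (c - 1) ≤ (x + 1) ^ c - x ^ c := by
  have hx₁ : 0 < x + 1 := by linarith
  set u := (x + 1)⁻¹ with hu
  have hu₁ : u ≤ 1 := inv_le_one_of_one_le₀ (by linarith)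
  have hbern : (1 + -u) ^ c ≤ 1 + c * -u :=
    rpow_one_add_le_one_add_mul_self (by linarith) hc₀ hc₁
  have hx_eq : x ^ c = (x + 1) ^ c * (1 + -u) ^ c := by
    rw [← Real.mul_rpow hx₁.le (by linarith)]
    congr 1
    rw [hu]
    field_simp
    ring
  have hpow : (x + 1) ^ (c - 1) = (x + 1) ^ c * u := by
    rw [Real.rpow_sub_one hx₁.ne', div_eq_mul_inv]
  rw [hx_eq, hpow]
  nlinarith [Real.rpow_nonneg hx₁.le c]

lemma rpow_sub_one_le_max_mul_rpow_sub_rpow {c x : ℝ} (hc : 0 < c) (hx : 0 ≤ x) :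
    (x + 1) ^ (c - 1) ≤ max 1 c⁻¹ * ((x + 1) ^ c - x ^ c) := by
  have hdiff : 0 ≤ (x + 1) ^ c - x ^ c :=
    sub_nonneg.2 (Real.rpow_le_rpow hx (by linarith) hc.le)
  rcases le_total 1 c with h | h
  · exact (rpow_sub_one_le_rpow_sub_rpow h hx).trans
      (le_mul_of_one_le_left hdiff (le_max_left _ _))
  · calc (x + 1) ^ (c - 1) ≤ c⁻¹ * ((x + 1) ^ c - x ^ c) := by
          rw [le_inv_mul_iff₀ hc]; exact mul_rpow_sub_one_le_rpow_sub_rpow hc.le h hx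
      _ ≤ max 1 c⁻¹ * ((x + 1) ^ c - x ^ c) :=
          mul_le_mul_of_nonneg_right (le_max_right _ _) hdiff

lemma sum_Icc_rpow_sub_one_le_s2 {c : ℝ} (hc : 0 < c) (K : ℕ) :
    ∑ n ∈ Icc 1 K, (n : ℝ) ^ (c - 1) ≤ max 1 c⁻¹ * (K : ℝ) ^ c := by
  induction K with
  | zero => simp [Real.zero_rpow hc.ne']
  | succ K ih =>
    rw [sum_Icc_succ_top (by omega), Nat.cast_succ]
    have := rpow_sub_one_le_max_mul_rpow_sub_rpow hc (Nat.cast_nonneg (α := ℝ) K)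
    linarith

lemma sum_filter_rpow_sub_one_le {c M : ℝ} (hc : 0 < c) (hM : 0 ≤ M) (N : ℕ) :
    ∑ n ∈ (Icc 1 N).filter (fun n : ℕ => (n : ℝ) ^ c ≤ M), (n : ℝ) ^ (c - 1)
      ≤ max 1 c⁻¹ * M := by
  set K := ⌊M ^ c⁻¹⌋₊
  have hK : (K : ℝ) ^ c ≤ M :=
    (le_rpow_inv_iff_of_pos (Nat.cast_nonneg _) hM hc).1 (Nat.floor_le (by positivity))
  have hsub : (Icc 1 N).filter (fun n : ℕ => (n : ℝ) ^ c ≤ M) ⊆ Icc 1 K := by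
    intro n hn
    simp only [mem_filter, mem_Icc] at hn ⊢
    exact ⟨hn.1.1, Nat.le_floor ((le_rpow_inv_iff_of_pos (Nat.cast_nonneg _) hM hc).2 hn.2)⟩
  calc _ ≤ ∑ n ∈ Icc 1 K, (n : ℝ) ^ (c - 1) :=
        sum_le_sum_of_subset_of_nonneg hsub fun n _ _ => by positivity
    _ ≤ max 1 c⁻¹ * (K : ℝ) ^ c := sum_Icc_rpow_sub_one_le_s2 hc K
    _ ≤ max 1 c⁻¹ * M := by gcongr

lemma sum_Icc_inv_le_one_add_log (N : ℕ) : ∑ n ∈ Icc 1 N, (n : ℝ)⁻¹ ≤ 1 + log N := by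
  simpa [harmonic_eq_sum_Icc] using harmonic_le_one_add_log N

lemma prod_rpow_sub_one_eq_mul_prod_inv {κ : Type*} [Fintype κ] (t : κ → ℕ) (ht : ∀ i, 1 ≤ t i)
    (c : κ → ℝ) :
    ∏ i, (t i : ℝ) ^ (c i - 1) = (∏ i, (t i : ℝ) ^ c i) * ∏ i, (t i : ℝ)⁻¹ := by
  rw [← prod_mul_distrib]
  refine prod_congr rfl fun i _ => ?_
  rw [Real.rpow_sub_one (by have := ht i; positivity), div_eq_mul_inv]

/- The exponent `s = 1 / (a + 1)` (rather than `1 / a`) also covers `a = 0`: all the proof needs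
is `a - 1 ≤ a (1 - s)`. -/
lemma rpow_sub_one_mul_le_rpow_mul_rpow {x P B : ℝ} (a : ℕ) (hx : 1 ≤ x) (hP : 0 ≤ P)
    (h : x ^ a * P ≤ B) :
    x ^ ((a : ℝ) - 1) * P ≤ B ^ (1 - ((a : ℝ) + 1)⁻¹) * P ^ ((a : ℝ) + 1)⁻¹ := by
  set s := ((a : ℝ) + 1)⁻¹
  have hs₀ : 0 < s := by positivity
  have hs₁ : s ≤ 1 := inv_le_one_of_one_le₀ (by simp)
  have hexp : (a : ℝ) - 1 ≤ a * (1 - s) := by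
    have : (a : ℝ) * (1 - s) = a - a * s := by ring
    have : (a : ℝ) * s ≤ 1 := by
      rw [← div_eq_mul_inv, div_le_one (by positivity)]; linarith
    linarith
  calc x ^ ((a : ℝ) - 1) * P ≤ (x ^ a) ^ (1 - s) * (P ^ (1 - s) * P ^ s) := by
        rw [← Real.rpow_add' hP (by simp), sub_add_cancel, Real.rpow_one,
          ← Real.rpow_natCast_mul (by linarith)]
        gcongr
    _ = (x ^ a * P) ^ (1 - s) * P ^ s := by
        rw [Real.mul_rpow (by positivity) hP]; ring
    _ ≤ B ^ (1 - s) * P ^ s := by gcongr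

section
variable {ι : Type*} [Fintype ι] [DecidableEq ι]

lemma sum_piFinset_prod_inv_le (N : ℕ) :
    ∑ t ∈ Fintype.piFinset (fun _ : ι => Icc 1 N), ∏ i, (t i : ℝ)⁻¹
      ≤ (1 + log N) ^ Fintype.card ι := by
  rw [← prod_univ_sum (fun _ => Icc 1 N) fun _ n => (n : ℝ)⁻¹, prod_const, card_univ]
  exact pow_le_pow_left₀ (sum_nonneg fun n _ => by positivity) (sum_Icc_inv_le_one_add_log N) _

lemma sum_piFinset_eq_sum_sum {α M : Type*} [AddCommMonoid M] (j : ι) (s : Finset α)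
    (f : (ι → α) → M) :
    ∑ y ∈ Fintype.piFinset (fun _ : ι => s), f y =
      ∑ t ∈ Fintype.piFinset (fun _ : {i // i ≠ j} => s), ∑ n ∈ s,
        f ((Equiv.funSplitAt j α).symm (n, t)) := by
  rw [← sum_product_right (f := fun p => f ((Equiv.funSplitAt j α).symm p))]
  refine sum_equiv (Equiv.funSplitAt j α) (fun y => ?_)
    (fun y _ => congrArg f ((Equiv.funSplitAt j α).symm_apply_apply y).symm)
  simp only [Fintype.mem_piFinset, mem_product, Equiv.funSplitAt_apply]
  exact ⟨fun h => ⟨h j, fun i => h i⟩,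
    fun ⟨hj, h⟩ i => if hi : i = j then hi ▸ hj else h ⟨i, hi⟩⟩

lemma prod_funSplitAt_symm_apply {α M : Type*} [CommMonoid M] (j : ι) (g : ι → α → M) (n : α)
    (t : {i // i ≠ j} → α) :
    ∏ i, g i ((Equiv.funSplitAt j α).symm (n, t) i) = g j n * ∏ i : {i // i ≠ j}, g i (t i) := by
  rw [Fintype.prod_eq_mul_prod_subtype_ne _ j]
  simp [fun i : {i // i ≠ j} => i.2]

lemma sum_filter_prod_rpow_le (c : ι → ℝ) {j : ι} (hcj : 0 < c j) (N : ℕ) {Q : ℝ} (hQ : 0 ≤ Q) :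
    ∑ y ∈ (Fintype.piFinset fun _ : ι => Icc 1 N).filter (fun y => ∏ i, (y i : ℝ) ^ c i ≤ Q),
        ∏ i, (y i : ℝ) ^ (c i - 1)
      ≤ max 1 (c j)⁻¹ * Q * (1 + log N) ^ (Fintype.card ι - 1) := by
  set K := max 1 (c j)⁻¹
  rw [sum_filter, sum_piFinset_eq_sum_sum j]
  calc _ ≤ ∑ t ∈ Fintype.piFinset (fun _ : {i // i ≠ j} => Icc 1 N),
        K * Q * ∏ i, (t i : ℝ)⁻¹ := sum_le_sum fun t ht => ?_
    _ = K * Q * ∑ t ∈ Fintype.piFinset (fun _ : {i // i ≠ j} => Icc 1 N), ∏ i, (t i : ℝ)⁻¹ := by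
        rw [mul_sum]
    _ ≤ K * Q * (1 + log N) ^ (Fintype.card ι - 1) := by
        rw [← show Fintype.card {i // i ≠ j} = Fintype.card ι - 1 by simp]
        gcongr
        exact sum_piFinset_prod_inv_le N
  have hprod : ∀ (d : ι → ℝ) (n : ℕ), ∏ i, (((Equiv.funSplitAt j ℕ).symm (n, t) i : ℕ) : ℝ) ^ d i
      = (n : ℝ) ^ d j * ∏ i : {i // i ≠ j}, (t i : ℝ) ^ d i :=
    fun d n => prod_funSplitAt_symm_apply j (fun i (m : ℕ) => (m : ℝ) ^ d i) n t
  simp only [hprod]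
  simp only [Fintype.mem_piFinset, mem_Icc] at ht
  set P := ∏ i : {i // i ≠ j}, (t i : ℝ) ^ c i
  have hP : 0 < P := prod_pos fun i _ => by have := (ht i).1; positivity
  rw [prod_rpow_sub_one_eq_mul_prod_inv t (fun i => (ht i).1)]
  calc _ = (∑ n ∈ (Icc 1 N).filter (fun n : ℕ => (n : ℝ) ^ c j ≤ Q / P), (n : ℝ) ^ (c j - 1))
        * (P * ∏ i, (t i : ℝ)⁻¹) := by
        rw [sum_filter, sum_mul]
        refine sum_congr rfl fun n _ => ?_
        simp only [le_div_iff₀ hP, ite_mul, zero_mul]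
        rfl
    _ ≤ K * (Q / P) * (P * ∏ i, (t i : ℝ)⁻¹) := by
        gcongr
        exact sum_filter_rpow_sub_one_le hcj (by positivity) N
    _ = K * Q * ∏ i, (t i : ℝ)⁻¹ := by field_simp

lemma prod_rpow_sub_one_le_of_prod_pow_le (a : ι → ℕ) (i₀ : ι) {B : ℝ} {X : ι → ℕ}
    (hX : ∀ i, 1 ≤ X i) (h : ∏ i, (X i : ℝ) ^ a i ≤ B) :
    ∏ i : {i // i ≠ i₀}, (X i : ℝ) ^ (a i.1 * ((a i₀ : ℝ) + 1)⁻¹) ≤ B ^ ((a i₀ : ℝ) + 1)⁻¹ ∧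
      ∏ i, (X i : ℝ) ^ ((a i : ℝ) - 1) ≤ B ^ (1 - ((a i₀ : ℝ) + 1)⁻¹) *
        ∏ i : {i // i ≠ i₀}, (X i : ℝ) ^ (a i.1 * ((a i₀ : ℝ) + 1)⁻¹ - 1) := by
  set s := ((a i₀ : ℝ) + 1)⁻¹
  have hx : (1 : ℝ) ≤ X i₀ := by exact_mod_cast hX i₀
  have ht : ∀ i : {i // i ≠ i₀}, 1 ≤ X i := fun i => hX i
  set P := ∏ i : {i // i ≠ i₀}, (X i : ℝ) ^ a i.1
  have hP : 0 ≤ P := by positivity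
  have hPs : ∏ i : {i // i ≠ i₀}, (X i : ℝ) ^ (a i.1 * s) = P ^ s := by
    rw [← Real.finsetProd_rpow _ _ fun i _ => by positivity]
    exact prod_congr rfl fun i _ => Real.rpow_natCast_mul (by positivity) _ _
  have hPa : ∏ i : {i // i ≠ i₀}, (X i : ℝ) ^ (a i.1 : ℝ) = P :=
    prod_congr rfl fun i _ => Real.rpow_natCast _ _
  have hxP : (X i₀ : ℝ) ^ a i₀ * P ≤ B := by
    rwa [Fintype.prod_eq_mul_prod_subtype_ne _ i₀] at h
  have hPB : P ≤ B := le_trans (le_mul_of_one_le_left hP (one_le_pow₀ hx)) hxP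
  refine ⟨hPs ▸ Real.rpow_le_rpow hP hPB (by positivity), ?_⟩
  rw [Fintype.prod_eq_mul_prod_subtype_ne _ i₀,
    prod_rpow_sub_one_eq_mul_prod_inv (fun i : {i // i ≠ i₀} => X i) ht fun i => (a i.1 : ℝ), hPa,
    prod_rpow_sub_one_eq_mul_prod_inv (fun i : {i // i ≠ i₀} => X i) ht fun i => a i.1 * s, hPs,
    ← mul_assoc, ← mul_assoc]
  exact mul_le_mul_of_nonneg_right (rpow_sub_one_mul_le_rpow_mul_rpow _ hx hP hxP) (by positivity)

noncomputable def sliceSum (a : ι → ℕ) (i₀ : ι) (η : ({i // i ≠ i₀} → ℕ) → ℕ) (B : ℝ) (N : ℕ) :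
    ℝ :=
  ∑ X ∈ (Fintype.piFinset fun _ : ι => Icc 1 N).filter
      (fun X => ∏ i, (X i : ℝ) ^ a i ≤ B ∧ X i₀ = η (fun j => X j.1)),
    ∏ i, (X i : ℝ) ^ ((a i : ℝ) - 1)

theorem sliceSum_le_rpow_mul_sum_filter (a : ι → ℕ) (i₀ : ι) (η : ({i // i ≠ i₀} → ℕ) → ℕ)
    {B : ℝ} (hB : 0 ≤ B) (N : ℕ) :
    sliceSum a i₀ η B N ≤ B ^ (1 - ((a i₀ : ℝ) + 1)⁻¹) *
      ∑ t ∈ (Fintype.piFinset fun _ : {i // i ≠ i₀} => Icc 1 N).filter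
          (fun t => ∏ i, (t i : ℝ) ^ (a i.1 * ((a i₀ : ℝ) + 1)⁻¹) ≤ B ^ ((a i₀ : ℝ) + 1)⁻¹),
        ∏ i, (t i : ℝ) ^ (a i.1 * ((a i₀ : ℝ) + 1)⁻¹ - 1) := by
  set s := ((a i₀ : ℝ) + 1)⁻¹
  set S := (Fintype.piFinset fun _ : ι => Icc 1 N).filter
    (fun X => ∏ i, (X i : ℝ) ^ a i ≤ B ∧ X i₀ = η (fun j => X j.1))
  set F : ({i // i ≠ i₀} → ℕ) → ℝ := fun t => B ^ (1 - s) *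
    if ∏ i, (t i : ℝ) ^ (a i * s) ≤ B ^ s then ∏ i, (t i : ℝ) ^ (a i * s - 1) else 0
  let rest : (ι → ℕ) → ({i // i ≠ i₀} → ℕ) := fun X j => X j
  have hinj : Set.InjOn rest S := by
    intro X hX Y hY h
    rw [mem_coe, mem_filter] at hX hY
    funext i
    by_cases hi : i = i₀
    · subst hi; rw [hX.2.2, hY.2.2]; exact congrArg η h
    · exact congrFun h ⟨i, hi⟩
  have hmaps : ∀ X ∈ S, rest X ∈ Fintype.piFinset fun _ : {i // i ≠ i₀} => Icc 1 N := by
    intro X hX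
    simp only [S, mem_filter, Fintype.mem_piFinset] at hX ⊢
    exact fun j => hX.1 j
  have hpoint : ∀ X ∈ S, ∏ i, (X i : ℝ) ^ ((a i : ℝ) - 1) ≤ F (rest X) := by
    intro X hX
    rw [mem_filter, Fintype.mem_piFinset] at hX
    obtain ⟨hcond, hbound⟩ := prod_rpow_sub_one_le_of_prod_pow_le a i₀
      (fun i => (mem_Icc.1 (hX.1 i)).1) hX.2.1
    simp only [F]
    rw [if_pos hcond]
    exact hbound
  calc sliceSum a i₀ η B N ≤ ∑ X ∈ S, F (rest X) := sum_le_sum hpoint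
    _ = ∑ t ∈ S.image rest, F t := (sum_image hinj).symm
    _ ≤ ∑ t ∈ Fintype.piFinset (fun _ : {i // i ≠ i₀} => Icc 1 N), F t :=
        sum_le_sum_of_subset_of_nonneg (image_subset_iff.2 hmaps) fun t _ _ =>
          mul_nonneg (by positivity) (by split_ifs <;> positivity)
    _ = _ := by rw [← mul_sum, sum_filter]

theorem sliceSum_le (a : ι → ℕ) (i₀ : ι) (η : ({i // i ≠ i₀} → ℕ) → ℕ) {B : ℝ} (hB : 1 ≤ B)
    {N : ℕ} (hN : (N : ℝ) ≤ B) :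
    sliceSum a i₀ η B N ≤ (a i₀ + 2) * B * (1 + log B) ^ (Fintype.card ι - 2) := by
  refine (sliceSum_le_rpow_mul_sum_filter a i₀ η (by linarith) N).trans ?_
  set s := ((a i₀ : ℝ) + 1)⁻¹
  have hs : 0 < s := by positivity
  have hBs : B ^ (1 - s) * B ^ s = B := by
    rw [← Real.rpow_add (by linarith), sub_add_cancel, Real.rpow_one]
  have hcard : Fintype.card {i // i ≠ i₀} = Fintype.card ι - 1 := by simp
  have hlogN : 1 + log N ≤ 1 + log B := by
    rcases N.eq_zero_or_pos with rfl | hN₀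
    · simpa using Real.log_nonneg hB
    · gcongr
  by_cases hpos : ∃ j : {i // i ≠ i₀}, 0 < a j
  · obtain ⟨j, hj⟩ := hpos
    have hcj : 0 < (a j : ℝ) * s := by positivity
    have hK : max 1 ((a j : ℝ) * s)⁻¹ ≤ a i₀ + 2 := by
      refine max_le (by linarith [(a i₀).cast_nonneg (α := ℝ)]) ?_
      rw [mul_inv, inv_inv]
      have : ((a j : ℝ))⁻¹ ≤ 1 := inv_le_one_of_one_le₀ (by exact_mod_cast hj)
      nlinarith [(a i₀).cast_nonneg (α := ℝ)]
    calc _ ≤ B ^ (1 - s) * (max 1 ((a j : ℝ) * s)⁻¹ * B ^ s *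
            (1 + log N) ^ (Fintype.card {i // i ≠ i₀} - 1)) := by
          gcongr
          exact sum_filter_prod_rpow_le (fun i : {i // i ≠ i₀} => (a i.1 : ℝ) * s) hcj N
            (by positivity)
      _ ≤ B ^ (1 - s) * ((a i₀ + 2) * B ^ s * (1 + log B) ^ (Fintype.card ι - 2)) := by
          rw [hcard, Nat.sub_sub]
          gcongr
      _ = (a i₀ + 2) * (B ^ (1 - s) * B ^ s) * (1 + log B) ^ (Fintype.card ι - 2) := by ring
      _ = _ := by rw [hBs]
  · simp only [not_exists, not_lt, Nat.le_zero] at hpos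
    have hinv : ∀ t : {i // i ≠ i₀} → ℕ,
        ∏ i, (t i : ℝ) ^ ((a i.1 : ℝ) * s - 1) = ∏ i, (t i : ℝ)⁻¹ := fun t =>
      prod_congr rfl fun i _ => by
        rw [hpos i, Nat.cast_zero, zero_mul, zero_sub, Real.rpow_neg_one]
    have hL : 1 ≤ 1 + log B := by linarith [Real.log_nonneg hB]
    have hlogB : 1 + log B ≤ (a i₀ + 2) * B ^ s := by
      have h₁ : log B ≤ B ^ s / s := Real.log_le_rpow_div (by linarith) hs
      have h₂ : 1 ≤ B ^ s := Real.one_le_rpow hB hs.le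
      rw [div_eq_mul_inv, inv_inv] at h₁
      linarith
    calc _ ≤ B ^ (1 - s) * ∑ t ∈ Fintype.piFinset (fun _ : {i // i ≠ i₀} => Icc 1 N),
            ∏ i, (t i : ℝ)⁻¹ := by
          simp only [hinv]
          gcongr
          exact filter_subset _ _
      _ ≤ B ^ (1 - s) * (1 + log B) ^ (Fintype.card ι - 1) := by
          rw [← hcard]
          gcongr
          exact (sum_piFinset_prod_inv_le N).trans (by gcongr)
      _ ≤ B ^ (1 - s) * ((1 + log B) ^ (Fintype.card ι - 2) * ((a i₀ + 2) * B ^ s)) := by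
          gcongr
          calc (1 + log B) ^ (Fintype.card ι - 1) ≤ (1 + log B) ^ (Fintype.card ι - 2 + 1) :=
                pow_le_pow_right₀ hL (by omega)
            _ = (1 + log B) ^ (Fintype.card ι - 2) * (1 + log B) := pow_succ _ _
            _ ≤ _ := by gcongr
      _ = (a i₀ + 2) * (B ^ (1 - s) * B ^ s) * (1 + log B) ^ (Fintype.card ι - 2) := by ring
      _ = _ := by rw [hBs]

end

theorem stmt_2_general (r : ℕ) (a : Fin r → ℕ) (i0 : Fin r) :
    ∃ C : ℝ, 0 < C ∧
      ∀ (η : ℝ → ({i : Fin r // i ≠ i0} → ℕ) → ℕ),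
        (∀ B x, 1 ≤ η B x) →
        ∀ B : ℝ, 2 < B →
          (∑ X ∈ (Fintype.piFinset fun _ : Fin r => Finset.Icc 1 ⌊B⌋₊).filter
              (fun X => (∏ i, ((X i : ℝ)) ^ (a i)) ≤ B ∧
                X i0 = η B (fun j => X j.1)),
            ∏ i, (X i : ℝ) ^ ((a i : ℝ) - 1))
          ≤ C * B * (Real.log B) ^ (r - 2) := by
  refine ⟨(a i0 + 2) * 3 ^ (r - 2), by positivity, fun η _ B hB => ?_⟩
  have hlog : 1 + log B ≤ 3 * log B := by
    have := Real.log_le_log (by norm_num) hB.le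
    linarith [Real.log_two_gt_d9]
  calc sliceSum a i0 (η B) B ⌊B⌋₊
      ≤ (a i0 + 2) * B * (1 + log B) ^ (Fintype.card (Fin r) - 2) :=
        sliceSum_le a i0 (η B) (by linarith) (Nat.floor_le (by linarith))
    _ ≤ (a i0 + 2) * B * (3 * log B) ^ (r - 2) := by
        rw [Fintype.card_fin]
        gcongr
        linarith [Real.log_nonneg (by linarith : (1 : ℝ) ≤ B)]
    _ = (a i0 + 2) * 3 ^ (r - 2) * B * log B ^ (r - 2) := by ring

/-- Sums of slicing type: if one coordinate `X_{i₀}` is determined by an arbitrary function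
`η` (possibly depending on `B`) of the other coordinates, then
`∑ ∏ Xᵢ^{aᵢ-1}` over tuples with `∏ Xᵢ^{aᵢ} ≤ B`, `max Xᵢ ≤ B` is `O(B (log B)^{r-2})`,
uniformly in `η`. -/
theorem stmt_2 (r : ℕ) (hr : 2 ≤ r) (a : Fin r → ℕ) (i0 : Fin r) :
    ∃ C : ℝ, 0 < C ∧
      ∀ (η : ℝ → ({i : Fin r // i ≠ i0} → ℕ) → ℕ),
        (∀ B x, 1 ≤ η B x) →
        ∀ B : ℝ, 2 < B →
          (∑ X ∈ (Fintype.piFinset fun _ : Fin r => Finset.Icc 1 ⌊B⌋₊).filter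
              (fun X => (∏ i, ((X i : ℝ)) ^ (a i)) ≤ B ∧
                X i0 = η B (fun j => X j.1)),
            ∏ i, (X i : ℝ) ^ ((a i : ℝ) - 1))
          ≤ C * B * (Real.log B) ^ (r - 2) :=
  stmt_2_general r a i0
end

section
/- Let $\mathcal{P}$ be a finite set of primes with product $\Pi(\mathcal{P})$, let $\mathcal{A} = (a_i)_{i \in I}$ be a finite sequence of integers, and for $d \in \mathbb{N}_{\geq 1}$ let $|\mathcal{A}_d| = \#\{i \in I : d \mid a_i\}$. Let $\mathfrak{X} > 0$ and let $g$ be a multiplicative function with $0 < g(p) < 1$ for each $p \mid \Pi(\mathcal{P})$. Then for every $D > 1$, the sifting function $S(\mathcal{A}, \mathcal{P}) = \#\{i \in I : \gcd(a_i, \Pi(\mathcal{P})) = 1\}$ satisfies $S(\mathcal{A}, \mathcal{P}) \leq \mathfrak{X}/J(\mathcal{P}, D) + \sum_{d \mid \Pi(\mathcal{P}),\, d < D} \tau_3(d) \, |R_d|$, where $J(\mathcal{P}, D) = \sum_{d \mid \Pi(\mathcal{P}),\, d < \sqrt{D}} \prod_{p \mid d} \frac{g(p)}{1 - g(p)}$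 and $R_d = |\mathcal{A}_d| - g(d)\mathfrak{X}$. -/
/-!
Selberg's Λ² sieve. For real weights `λ` with `λ₁ = 1`, the indicator of `gcd(a, Π(𝒫)) = 1` is
at most `(∑_{d ∣ gcd(a, Π(𝒫))} λ_d)²`; summing over the sequence and expanding the square
bounds `S(𝒜, 𝒫)` by `𝔛 ∑ λ_{d₁} λ_{d₂} g([d₁, d₂]) + ∑ λ_{d₁} λ_{d₂} R_{[d₁, d₂]}`.
The quadratic form diagonalises as `∑_l h(l)⁻¹ y_l²` with `h(l) = ∏_{p ∣ l} g(p)/(1 - g(p))` and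
`y_l = ∑_{l ∣ d} g(d) λ_d`. Selberg's weights are the ones for which Möbius inversion gives
`y_l = μ(l) h(l) / J` for `l < √D` and `y_l = 0` otherwise, so that the main term is `𝔛 / J`.
These weights vanish for `d ≥ √D` and satisfy `|λ_d| ≤ 1`, and at most `τ₃(d)` pairs have
`[d₁, d₂] = d`, which bounds the remainder term.
-/

open scoped Classical
open Finset

/-- `τ₃(d)`: the number of ways of writing `d` as an ordered product of three positive
integers, `τ₃(d) = ∑_{e ∣ d} τ(e)`. -/
def tau3 (d : ℕ) : ℕ := ∑ e ∈ d.divisors, e.divisors.card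

open ArithmeticFunction
open scoped ArithmeticFunction.Moebius

theorem card_filter_lcm_eq_le_tau3 {d : ℕ} (hd : d ≠ 0) :
    #{x ∈ d.divisors ×ˢ d.divisors | d = x.1.lcm x.2} ≤ tau3 d := by
  rw [tau3, ← card_sigma]
  refine card_le_card_of_injOn (fun x => ⟨x.1, x.1.gcd x.2⟩) ?_ ?_
  · rintro ⟨d₁, d₂⟩ hx
    simp only [coe_filter, mem_product, Nat.mem_divisors] at hx
    simp only [coe_sigma, Set.mem_sigma_iff, mem_coe, Nat.mem_divisors]
    exact ⟨hx.1.1, Nat.gcd_dvd_left _ _, ne_zero_of_dvd_ne_zero hd hx.1.1.1⟩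
  · rintro ⟨d₁, d₂⟩ hx ⟨e₁, e₂⟩ hy hxy
    simp only [coe_filter, mem_product, Nat.mem_divisors] at hx hy
    simp only [Sigma.mk.inj_iff, heq_eq_eq] at hxy
    obtain ⟨rfl, hgcd⟩ := hxy
    -- `gcd * lcm = d₁ * d₂` with `lcm = d` fixed recovers the second coordinate
    have h := (Nat.gcd_mul_lcm d₁ d₂).symm.trans
      (hgcd ▸ hx.2.symm ▸ hy.2.symm ▸ Nat.gcd_mul_lcm d₁ e₂)
    rw [Nat.eq_of_mul_eq_mul_left (Nat.pos_of_ne_zero (ne_zero_of_dvd_ne_zero hd hx.1.1.1)) h]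

theorem sum_moebius_filter_dvd {n : ℕ} (hn : Squarefree n) (l : ℕ) :
    ∑ d ∈ n.divisors with l ∣ d, (μ d : ℝ) = if n = l then (μ l : ℝ) else 0 := by
  by_cases hl : l ∣ n
  swap
  · rw [filter_false_of_mem fun d hd hld => hl (hld.trans (Nat.dvd_of_mem_divisors hd)),
      sum_empty, if_neg (by rintro rfl; exact hl dvd_rfl)]
  obtain ⟨m, rfl⟩ := hl
  have hl0 : l ≠ 0 := left_ne_zero_of_mul hn.ne_zero
  have hm0 : m ≠ 0 := right_ne_zero_of_mul hn.ne_zero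
  have hfilter : {d ∈ (l * m).divisors | l ∣ d} = m.divisors.image (l * ·) := by
    ext d
    simp only [mem_filter, Nat.mem_divisors, mem_image]
    constructor
    · rintro ⟨⟨hd, -⟩, e, rfl⟩
      exact ⟨e, ⟨(Nat.mul_dvd_mul_iff_left (Nat.pos_of_ne_zero hl0)).mp hd, hm0⟩, rfl⟩
    · rintro ⟨e, ⟨he, -⟩, rfl⟩
      exact ⟨⟨mul_dvd_mul_left l he, hn.ne_zero⟩, dvd_mul_right l e⟩
  rw [hfilter, sum_image fun _ _ _ _ h => Nat.eq_of_mul_eq_mul_left (Nat.pos_of_ne_zero hl0) h]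
  have hμ : ∀ e ∈ m.divisors, (μ (l * e) : ℝ) = μ l * μ e := fun e he => by
    have hcop := (Nat.coprime_of_squarefree_mul hn).coprime_dvd_right (Nat.dvd_of_mem_divisors he)
    rw [isMultiplicative_moebius.map_mul_of_coprime hcop, Int.cast_mul]
  have hsum : ∑ e ∈ m.divisors, (μ e : ℝ) = if m = 1 then 1 else 0 := by
    simpa only [coe_mul_zeta_apply, intCoe_apply, one_apply] using
      congrArg (· m) (coe_moebius_mul_coe_zeta (R := ℝ))
  rw [sum_congr rfl hμ, ← mul_sum, hsum]
  simp [mul_eq_left₀ hl0]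

theorem eq_and_eq_of_mul_eq_mul_of_coprime {d m m' l l' : ℕ} (hm : m.Coprime d)
    (hm' : m'.Coprime d) (hl : l ∣ d) (hl' : l' ∣ d) (hd : d ≠ 0) (h : m * l = m' * l') :
    m = m' ∧ l = l' := by
  have hgcd : ∀ {k c}, k.Coprime d → c ∣ d → (k * c).gcd d = c := fun hk hc => by
    rw [hk.gcd_mul_left_cancel, Nat.gcd_eq_left hc]
  have hll' : l = l' := by rw [← hgcd hm hl, h, hgcd hm' hl']
  subst hll'
  exact ⟨Nat.eq_of_mul_eq_mul_right (Nat.pos_of_ne_zero (ne_zero_of_dvd_ne_zero hd hl)) h, rfl⟩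

theorem sum_image_ite_card_filter {ι : Type*} (I : Finset ι) (f : ι → ℕ) (q : ℕ → Prop)
    [DecidablePred q] :
    ∑ n ∈ I.image f, (if q n then (#{i ∈ I | f i = n} : ℝ) else 0) = #{i ∈ I | q (f i)} := by
  rw [card_eq_sum_card_fiberwise (t := I.image f) fun i hi =>
    mem_image_of_mem f (mem_filter.mp hi).1]
  push_cast
  refine sum_congr rfl fun n _ => ?_
  rw [filter_filter]
  split_ifs with hq
  · rw [filter_congr fun i _ => show q (f i) ∧ f i = n ↔ f i = n from
      ⟨And.right, fun h => ⟨h ▸ hq, h⟩⟩]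
  · rw [filter_false_of_mem fun i _ (h : q (f i) ∧ f i = n) => hq (h.2 ▸ h.1), card_empty,
      Nat.cast_zero]

theorem mem_of_prime_dvd_prod {P : Finset ℕ} (hP : ∀ p ∈ P, p.Prime) {p : ℕ} (hp : p.Prime)
    (hpP : p ∣ ∏ q ∈ P, q) : p ∈ P := by
  rw [← Nat.primeFactors_prod hP]
  exact Nat.mem_primeFactors.mpr ⟨hp, hpP, prod_ne_zero_iff.mpr fun q hq => (hP q hq).ne_zero⟩

noncomputable section

namespace BoundingSieve

variable (s : BoundingSieve) (D : ℝ)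

def lowDivisors : Finset ℕ := {d ∈ s.prodPrimes.divisors | (d : ℝ) < √D}

def selbergSum : ℝ := ∑ l ∈ s.lowDivisors D, s.selbergTerms l

/-- Selberg's weights `λ_d = μ(d) / (g(d) J) ∑_{n < √D, d ∣ n} h(n)`, the minimisers of the
quadratic form of the main term under `λ₁ = 1`. -/
def selbergWeights (d : ℕ) : ℝ :=
  μ d * (∑ n ∈ s.lowDivisors D with d ∣ n, s.selbergTerms n) / (s.nu d * s.selbergSum D)

variable {s D}

theorem lowDivisors_subset : s.lowDivisors D ⊆ s.prodPrimes.divisors := filter_subset _ _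

theorem dvd_prodPrimes_of_mem_lowDivisors {n : ℕ} (hn : n ∈ s.lowDivisors D) :
    n ∣ s.prodPrimes :=
  Nat.dvd_of_mem_divisors (lowDivisors_subset hn)

theorem mem_lowDivisors_of_dvd {m n : ℕ} (hn : n ∈ s.lowDivisors D) (hmn : m ∣ n) :
    m ∈ s.lowDivisors D := by
  obtain ⟨hnP, hnD⟩ := mem_filter.mp hn
  refine mem_filter.mpr ⟨Nat.mem_divisors.mpr ⟨hmn.trans (Nat.dvd_of_mem_divisors hnP),
    prodPrimes_ne_zero⟩, lt_of_le_of_lt ?_ hnD⟩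
  exact Nat.cast_le.mpr (Nat.le_of_dvd (Nat.pos_of_mem_divisors hnP) hmn)

theorem one_mem_lowDivisors (hD : 1 < D) : 1 ∈ s.lowDivisors D :=
  mem_filter.mpr ⟨Nat.one_mem_divisors.mpr prodPrimes_ne_zero, by
    rw [Nat.cast_one, Real.lt_sqrt zero_le_one]; linarith⟩

theorem selbergSum_pos (hD : 1 < D) : 0 < s.selbergSum D :=
  sum_pos (fun _ hl => selbergTerms_pos (dvd_prodPrimes_of_mem_lowDivisors hl))
    ⟨1, one_mem_lowDivisors hD⟩

theorem selbergWeights_one (hD : 1 < D) : s.selbergWeights D 1 = 1 := by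
  simp only [selbergWeights, moebius_apply_one, Int.cast_one, one_mul, one_dvd, filter_true,
    s.nu_mult.map_one]
  exact div_self (selbergSum_pos hD).ne'

theorem selbergWeights_eq_zero_of_le {d : ℕ} (hd : √D ≤ d) : s.selbergWeights D d = 0 := by
  suffices {n ∈ s.lowDivisors D | d ∣ n} = ∅ by simp [selbergWeights, this]
  exact filter_false_of_mem fun n hn hdn =>
    (not_lt.mpr hd) (mem_filter.mp (mem_lowDivisors_of_dvd hn hdn)).2

theorem selbergTerms_mul_eq_nu_mul_sum {d m : ℕ} (hd : d ∣ s.prodPrimes) (hm : m.Coprime d) :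
    s.selbergTerms (m * d) = s.nu d * ∑ l ∈ d.divisors, s.selbergTerms (m * l) := by
  have hmul := s.selbergTerms_isMultiplicative
  have hsum : ∑ l ∈ d.divisors, s.selbergTerms l = s.selbergTerms d * (s.nu d)⁻¹ := by
    rw [← sum_divisors_selbergTerms_eq_selbergTerms_mul_nu_inv hd, ← sum_filter,
      Nat.divisors_filter_dvd_of_dvd prodPrimes_ne_zero hd]
  rw [sum_congr rfl fun l hl => hmul.map_mul_of_coprime
    (hm.coprime_dvd_right (Nat.dvd_of_mem_divisors hl)), ← mul_sum, hsum,
    hmul.map_mul_of_coprime hm]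
  field_simp [s.nu_ne_zero hd]

theorem sum_lowDivisors_dvd_le {d : ℕ} (hd : d ∣ s.prodPrimes) :
    ∑ n ∈ s.lowDivisors D with d ∣ n, s.selbergTerms n ≤ s.nu d * s.selbergSum D := by
  set T := {n ∈ s.lowDivisors D | d ∣ n}
  have hmem : ∀ n ∈ T, n ∈ s.lowDivisors D ∧ d ∣ n := fun n hn => mem_filter.mp hn
  have hcop : ∀ n ∈ T, (n / d).Coprime d := fun n hn => Nat.coprime_of_squarefree_mul <|
    (Nat.div_mul_cancel (hmem n hn).2).symm ▸
      squarefree_of_dvd_prodPrimes (dvd_prodPrimes_of_mem_lowDivisors (hmem n hn).1)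
  -- `(n, l) ↦ n / d * l` embeds `T × divisors d` into `lowDivisors D`
  have hinj : Set.InjOn (fun x : ℕ × ℕ => x.1 / d * x.2) (T ×ˢ d.divisors : Finset _) := by
    rintro ⟨n, l⟩ hx ⟨n', l'⟩ hx' h
    simp only [coe_product, Set.mem_prod, mem_coe, Nat.mem_divisors] at hx hx' h
    obtain ⟨hq, rfl⟩ := eq_and_eq_of_mul_eq_mul_of_coprime (hcop n hx.1) (hcop n' hx'.1)
      hx.2.1 hx'.2.1 hx.2.2 h
    rw [Nat.div_left_inj (hmem n hx.1).2 (hmem n' hx'.1).2] at hq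
    rw [hq]
  have hmaps : ∀ x ∈ T ×ˢ d.divisors, x.1 / d * x.2 ∈ s.lowDivisors D := by
    rintro ⟨n, l⟩ hx
    obtain ⟨hn, hl⟩ := mem_product.mp hx
    refine mem_lowDivisors_of_dvd (hmem n hn).1 ?_
    calc n / d * l ∣ n / d * d := mul_dvd_mul_left _ (Nat.dvd_of_mem_divisors hl)
      _ = n := Nat.div_mul_cancel (hmem n hn).2
  calc ∑ n ∈ T, s.selbergTerms n
      = s.nu d * ∑ x ∈ T ×ˢ d.divisors, s.selbergTerms (x.1 / d * x.2) := by
        rw [sum_product, mul_sum]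
        refine sum_congr rfl fun n hn => ?_
        rw [← selbergTerms_mul_eq_nu_mul_sum hd (hcop n hn), Nat.div_mul_cancel (hmem n hn).2]
    _ ≤ s.nu d * s.selbergSum D := by
        rw [← sum_image hinj]
        gcongr
        · exact (s.nu_pos_of_dvd_prodPrimes hd).le
        · exact sum_le_sum_of_subset_of_nonneg (image_subset_iff.mpr hmaps) fun n hn _ =>
            (selbergTerms_pos (dvd_prodPrimes_of_mem_lowDivisors hn)).le

theorem selbergTerms_eq_prod {d : ℕ} (hd : d ∣ s.prodPrimes) :
    s.selbergTerms d = ∏ p ∈ d.primeFactors, s.nu p / (1 - s.nu p) := by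
  simp only [selbergTerms_apply, ← prod_primeFactors_nu hd, div_eq_mul_inv, prod_mul_distrib]

theorem abs_selbergWeights_le_one (d : ℕ) : |s.selbergWeights D d| ≤ 1 := by
  by_cases hd : d ∣ s.prodPrimes
  · have hG : 0 ≤ ∑ n ∈ s.lowDivisors D with d ∣ n, s.selbergTerms n :=
      sum_nonneg fun n hn =>
        (selbergTerms_pos (dvd_prodPrimes_of_mem_lowDivisors (mem_filter.mp hn).1)).le
    have hμ : |(μ d : ℝ)| ≤ 1 := by exact_mod_cast abs_moebius_le_one
    rw [selbergWeights, abs_div, abs_mul, abs_of_nonneg hG,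
      abs_of_nonneg (hG.trans (sum_lowDivisors_dvd_le hd))]
    exact div_le_one_of_le₀ ((mul_le_of_le_one_left hG hμ).trans (sum_lowDivisors_dvd_le hd))
      (hG.trans (sum_lowDivisors_dvd_le hd))
  · have : {n ∈ s.lowDivisors D | d ∣ n} = ∅ :=
      filter_false_of_mem fun n hn hdn => hd (hdn.trans (dvd_prodPrimes_of_mem_lowDivisors hn))
    simp [selbergWeights, this]

theorem sum_dvd_nu_mul_selbergWeights {l : ℕ} :
    ∑ d ∈ s.prodPrimes.divisors, (if l ∣ d then s.nu d * s.selbergWeights D d else 0)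
      = if l ∈ s.lowDivisors D then μ l * s.selbergTerms l / s.selbergSum D else 0 := by
  calc ∑ d ∈ s.prodPrimes.divisors, (if l ∣ d then s.nu d * s.selbergWeights D d else 0)
      = ∑ d ∈ s.prodPrimes.divisors with l ∣ d, ∑ n ∈ s.lowDivisors D with d ∣ n,
          μ d * s.selbergTerms n / s.selbergSum D := by
        rw [← sum_filter]
        refine sum_congr rfl fun d hd => ?_
        rw [selbergWeights, ← sum_div, ← mul_sum]
        field_simp [s.nu_ne_zero (Nat.dvd_of_mem_divisors (mem_filter.mp hd).1)]
    _ = ∑ n ∈ s.lowDivisors D, s.selbergTerms n / s.selbergSum D *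
          ∑ d ∈ n.divisors with l ∣ d, (μ d : ℝ) := by
        rw [sum_comm' (t' := s.lowDivisors D) (s' := fun n => {d ∈ n.divisors | l ∣ d})]
        · simp_rw [mul_sum]
          exact sum_congr rfl fun n _ => sum_congr rfl fun d _ => by ring
        intro d n
        simp only [mem_filter, Nat.mem_divisors]
        constructor
        · rintro ⟨⟨-, hld⟩, hn, hdn⟩
          exact ⟨⟨⟨hdn, (Nat.pos_of_mem_divisors (mem_filter.mp hn).1).ne'⟩, hld⟩, hn⟩
        · rintro ⟨⟨⟨hdn, -⟩, hld⟩, hn⟩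
          exact ⟨⟨⟨hdn.trans (dvd_prodPrimes_of_mem_lowDivisors hn), prodPrimes_ne_zero⟩, hld⟩,
            hn, hdn⟩
    _ = ∑ n ∈ s.lowDivisors D, if n = l then s.selbergTerms n / s.selbergSum D * μ l else 0 := by
        refine sum_congr rfl fun n hn => ?_
        rw [sum_moebius_filter_dvd (squarefree_of_dvd_prodPrimes
          (dvd_prodPrimes_of_mem_lowDivisors hn)), mul_ite, mul_zero]
    _ = _ := by rw [sum_ite_eq']; ring_nf

theorem abs_lambdaSquared_le_tau3 {w : ℕ → ℝ} (hw : ∀ d, |w d| ≤ 1) {d : ℕ} (hd : d ≠ 0) :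
    |lambdaSquared w d| ≤ tau3 d := by
  calc |lambdaSquared w d|
      ≤ ∑ d₁ ∈ d.divisors, ∑ d₂ ∈ d.divisors, if d = d₁.lcm d₂ then (1 : ℝ) else 0 := by
        refine (abs_sum_le_sum_abs _ _).trans <| sum_le_sum fun d₁ _ =>
          (abs_sum_le_sum_abs _ _).trans <| sum_le_sum fun d₂ _ => ?_
        split_ifs
        · rw [abs_mul]; exact mul_le_one₀ (hw _) (abs_nonneg _) (hw _)
        · simp
    _ = #{x ∈ d.divisors ×ˢ d.divisors | d = x.1.lcm x.2} := by
        rw [card_filter, sum_product]; push_cast; rfl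
    _ ≤ tau3 d := by exact_mod_cast card_filter_lcm_eq_le_tau3 hd

theorem lambdaSquared_eq_zero_of_sq_le {w : ℕ → ℝ} {y : ℝ} (hw : ∀ d : ℕ, y ≤ d → w d = 0)
    {d : ℕ} (hd : y ^ 2 ≤ d) : lambdaSquared w d = 0 := by
  refine sum_eq_zero fun d₁ hd₁ => sum_eq_zero fun d₂ hd₂ => ?_
  split_ifs with h
  · by_contra hne
    have h₁ : (d₁ : ℝ) < y := lt_of_not_ge fun h' => hne (by rw [hw d₁ h', zero_mul])
    have h₂ : (d₂ : ℝ) < y := lt_of_not_ge fun h' => hne (by rw [hw d₂ h', mul_zero])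
    have hlcm : (d : ℝ) ≤ d₁ * d₂ := by
      rw [h]
      exact_mod_cast Nat.lcm_le_mul (Nat.pos_of_mem_divisors hd₁) (Nat.pos_of_mem_divisors hd₂)
    rw [sq] at hd
    linarith [mul_lt_mul'' h₁ h₂ (Nat.cast_nonneg d₁) (Nat.cast_nonneg d₂)]
  · rfl

theorem errSum_lambdaSquared_le {w : ℕ → ℝ} (hw₁ : ∀ d, |w d| ≤ 1)
    (hw : ∀ d : ℕ, √D ≤ d → w d = 0) (hD : 0 ≤ D) :
    s.errSum (lambdaSquared w)
      ≤ ∑ d ∈ s.prodPrimes.divisors.filter (fun d : ℕ => (d : ℝ) < D),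
          (tau3 d : ℝ) * |s.rem d| := by
  rw [errSum, sum_filter]
  refine sum_le_sum fun d hd => ?_
  split_ifs with hdD
  · gcongr
    exact abs_lambdaSquared_le_tau3 hw₁ (Nat.pos_of_mem_divisors hd).ne'
  · rw [lambdaSquared_eq_zero_of_sq_le hw (by rw [Real.sq_sqrt hD]; exact not_lt.mp hdD),
      abs_zero, zero_mul]

theorem mainSum_lambdaSquared_selbergWeights (hD : 1 < D) :
    s.mainSum (lambdaSquared (s.selbergWeights D)) = (s.selbergSum D)⁻¹ := by
  have hJ := (selbergSum_pos (s := s) hD).ne'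
  have hterm : ∀ l ∈ s.prodPrimes.divisors, (s.selbergTerms l)⁻¹ *
      (∑ d ∈ s.prodPrimes.divisors, if l ∣ d then s.nu d * s.selbergWeights D d else 0) ^ 2
        = if l ∈ s.lowDivisors D then s.selbergTerms l / s.selbergSum D ^ 2 else 0 := by
    intro l hl
    have hsq : (μ l : ℝ) ^ 2 = 1 := by
      exact_mod_cast moebius_sq_eq_one_of_squarefree (squarefree_of_mem_divisors_prodPrimes hl)
    have hh := (selbergTerms_pos (s := s) (Nat.dvd_of_mem_divisors hl)).ne'
    rw [sum_dvd_nu_mul_selbergWeights]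
    split_ifs
    · field_simp
      rw [hsq]
    · simp
  rw [mainSum_lambdaSquared_eq_sum_mul_sum_sq, sum_congr rfl hterm, sum_ite_mem,
    inter_eq_right.mpr lowDivisors_subset, ← sum_div, ← selbergSum]
  field_simp

theorem siftedSum_le_div_selbergSum_add (hD : 1 < D) :
    s.siftedSum ≤ s.totalMass / s.selbergSum D
      + ∑ d ∈ s.prodPrimes.divisors.filter (fun d : ℕ => (d : ℝ) < D),
          (tau3 d : ℝ) * |s.rem d| := by
  calc s.siftedSum
      ≤ s.totalMass * s.mainSum (lambdaSquared (s.selbergWeights D))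
        + s.errSum (lambdaSquared (s.selbergWeights D)) :=
        siftedSum_le_mainSum_errSum_of_upperMoebius _
          (upperMoebius_lambdaSquared _ (selbergWeights_one hD))
    _ ≤ _ := by
        rw [mainSum_lambdaSquared_selbergWeights hD, ← div_eq_mul_inv]
        gcongr
        exact errSum_lambdaSquared_le abs_selbergWeights_le_one
          (fun _ => selbergWeights_eq_zero_of_le) (by linarith)

section IntFamily

variable {ι : Type*} (I : Finset ι) (a : ι → ℤ) (P : Finset ℕ) (hP : ∀ p ∈ P, p.Prime) (X : ℝ)
  (g : ℕ → ℝ) (hg1 : g 1 = 1) (hgmul : ∀ m n : ℕ, Nat.Coprime m n → g (m * n) = g m * g n)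
  (hgp : ∀ p ∈ P, 0 < g p ∧ g p < 1)

/-- The sieve problem of the sequence `(aᵢ)_{i ∈ I}`: `n` is weighted by the number of `i` with
`|aᵢ| = n`, and `g` becomes an arithmetic function by setting its value at `0` to `0`. -/
def ofIntFamily : BoundingSieve where
  support := I.image fun i => (a i).natAbs
  prodPrimes := ∏ p ∈ P, p
  prodPrimes_squarefree := squarefree_prod_of_pairwise_isCoprime
    (fun p hp q hq hpq => Nat.coprime_iff_isRelPrime.mp <|
      (Nat.coprime_primes (hP p hp) (hP q hq)).mpr hpq)
    fun p hp => (hP p hp).squarefree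
  weights n := #{i ∈ I | (a i).natAbs = n}
  weights_nonneg _ := Nat.cast_nonneg _
  totalMass := X
  nu := ⟨fun n => if n = 0 then 0 else g n, if_pos rfl⟩
  nu_mult := IsMultiplicative.iff_ne_zero.mpr
    ⟨by simp [hg1], fun hm hn hmn => by simp [hm, hn, hgmul _ _ hmn]⟩
  nu_pos_of_prime p hp hpP := by
    simpa [hp.ne_zero] using (hgp p (mem_of_prime_dvd_prod hP hp hpP)).1
  nu_lt_one_of_prime p hp hpP := by
    simpa [hp.ne_zero] using (hgp p (mem_of_prime_dvd_prod hP hp hpP)).2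

variable {I a P hP X g hg1 hgmul hgp}

theorem siftedSum_ofIntFamily : (ofIntFamily I a P hP X g hg1 hgmul hgp).siftedSum
    = #{i ∈ I | Int.gcd (a i) ((∏ p ∈ P, p : ℕ) : ℤ) = 1} := by
  refine (sum_image_ite_card_filter I _ _).trans ?_
  congr 2
  exact filter_congr fun i _ => by
    rw [Int.gcd, Int.natAbs_natCast, Nat.gcd_comm]
    rfl

theorem rem_ofIntFamily {d : ℕ} (hd : d ≠ 0) : (ofIntFamily I a P hP X g hg1 hgmul hgp).rem d
    = #{i ∈ I | (d : ℤ) ∣ a i} - g d * X := by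
  rw [rem, multSum]
  congr 1
  · simp only [Int.natCast_dvd]
    exact sum_image_ite_card_filter I _ _
  · simp [ofIntFamily, hd]

theorem selbergTerms_ofIntFamily {d : ℕ} (hd : d ∣ ∏ p ∈ P, p) :
    (ofIntFamily I a P hP X g hg1 hgmul hgp).selbergTerms d
      = ∏ p ∈ d.primeFactors, g p / (1 - g p) := by
  rw [selbergTerms_eq_prod hd]
  refine prod_congr rfl fun p hp => ?_
  simp [ofIntFamily, (Nat.prime_of_mem_primeFactors hp).ne_zero]

end IntFamily

end BoundingSieve

end

theorem stmt_9_general {ι : Type*} (I : Finset ι) (a : ι → ℤ)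
    (P : Finset ℕ) (hP : ∀ p ∈ P, p.Prime)
    (X : ℝ)
    (g : ℕ → ℝ) (hg1 : g 1 = 1)
    (hgmul : ∀ m n : ℕ, Nat.Coprime m n → g (m * n) = g m * g n)
    (hgp : ∀ p ∈ P, 0 < g p ∧ g p < 1) :
    ∀ D : ℝ, 1 < D →
      ((I.filter fun i => Int.gcd (a i) ((∏ p ∈ P, p : ℕ) : ℤ) = 1).card : ℝ)
        ≤ X / (∑ d ∈ (∏ p ∈ P, p).divisors.filter (fun d : ℕ => (d : ℝ) < Real.sqrt D),
                ∏ p ∈ d.primeFactors, g p / (1 - g p))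
          + ∑ d ∈ (∏ p ∈ P, p).divisors.filter (fun d : ℕ => (d : ℝ) < D),
              (tau3 d : ℝ) *
                |((I.filter fun i => (d : ℤ) ∣ a i).card : ℝ) - g d * X| := by
  intro D hD
  let s := BoundingSieve.ofIntFamily I a P hP X g hg1 hgmul hgp
  calc _ = s.siftedSum := BoundingSieve.siftedSum_ofIntFamily.symm
    _ ≤ _ := s.siftedSum_le_div_selbergSum_add hD
    _ = _ := by
      refine congrArg₂ (· + ·) (congrArg (X / ·) (sum_congr rfl fun d hd => ?_))
        (sum_congr rfl fun d hd => ?_)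
      · exact BoundingSieve.selbergTerms_ofIntFamily (Nat.dvd_of_mem_divisors (mem_filter.mp hd).1)
      · rw [BoundingSieve.rem_ofIntFamily (Nat.pos_of_mem_divisors (mem_filter.mp hd).1).ne']

/-- Selberg's sieve (Friedlander–Iwaniec, Theorem 7.1): for a finite sequence of integers
`(aᵢ)_{i ∈ I}`, a finite set of primes `𝒫` with product `Π(𝒫)`, a level `D > 1`, an
approximation `𝔛 > 0` and a multiplicative density function `g` with `0 < g(p) < 1` for
`p ∈ 𝒫`, the sifting function satisfies
`S(𝒜,𝒫) ≤ 𝔛/J(𝒫,D) + ∑_{d ∣ Π(𝒫), d < D} τ₃(d) |R_d|`. -/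
theorem stmt_9 {ι : Type*} (I : Finset ι) (a : ι → ℤ)
    (P : Finset ℕ) (hP : ∀ p ∈ P, p.Prime)
    (X : ℝ) (hX : 0 < X)
    (g : ℕ → ℝ) (hg1 : g 1 = 1)
    (hgmul : ∀ m n : ℕ, Nat.Coprime m n → g (m * n) = g m * g n)
    (hgp : ∀ p ∈ P, 0 < g p ∧ g p < 1) :
    ∀ D : ℝ, 1 < D →
      ((I.filter fun i => Int.gcd (a i) ((∏ p ∈ P, p : ℕ) : ℤ) = 1).card : ℝ)
        ≤ X / (∑ d ∈ (∏ p ∈ P, p).divisors.filter (fun d : ℕ => (d : ℝ) < Real.sqrt D),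
                ∏ p ∈ d.primeFactors, g p / (1 - g p))
          + ∑ d ∈ (∏ p ∈ P, p).divisors.filter (fun d : ℕ => (d : ℝ) < D),
              (tau3 d : ℝ) *
                |((I.filter fun i => (d : ℤ) ∣ a i).card : ℝ) - g d * X| :=
  stmt_9_general I a P hP X g hg1 hgmul hgp
end

section
/- Let $r \geq 2$, let $a_1,\dots,a_r \in \mathbb{Z}_{\geq 0}$, fix $i_0 \in \{1,\dots,r\}$, and for $B > 3$ consider $S'(B) = \sum X_{i_0}^{a_{i_0} - 2} \prod_{i \neq i_0} X_i^{a_i - 1}$, the sum over tuples $(X_1,\dots,X_r) \in \mathbb{N}_{\geq 1}^r$ with $\prod_{i=1}^r X_i^{a_i} \leq B$ and $\max_i X_i \leq B$. Then $S'(B) = O(B (\log B)^{r-2})$, with implied constant depending only on $r$ and the $a_i$. -/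
open scoped Classical
open Finset Real

lemma my_sum_inv_le (N : ℕ) : ∑ x ∈ Finset.Icc 1 N, ((x:ℝ))⁻¹ ≤ 1 + Real.log N := by
  have h := harmonic_le_one_add_log N
  rw [harmonic_eq_sum_Icc] at h
  calc ∑ x ∈ Finset.Icc 1 N, ((x:ℝ))⁻¹
      = ((∑ x ∈ Finset.Icc 1 N, ((x:ℚ))⁻¹ : ℚ) : ℝ) := by push_cast; rfl
    _ ≤ 1 + Real.log N := h

lemma my_sum_inv_sq_le (N : ℕ) : ∑ x ∈ Finset.Icc 1 N, (((x:ℝ))^2)⁻¹ ≤ 2 := by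
  have h : ∀ n : ℕ, ∑ x ∈ Finset.Icc 1 n, (((x:ℝ))^2)⁻¹ ≤ 2 - 2/((n:ℝ)+1) := by
    intro n
    induction n with
    | zero => simp
    | succ n ih =>
      rw [Finset.sum_Icc_succ_top (Nat.le_add_left 1 n)]
      have h1 : (0:ℝ) < (n:ℝ) + 1 := by positivity
      have h2 : (0:ℝ) < (n:ℝ) + 2 := by positivity
      have hc : ((n+1:ℕ):ℝ) = (n:ℝ) + 1 := by push_cast; ring
      rw [hc]
      have key : (((n:ℝ)+1)^2)⁻¹ ≤ 2/((n:ℝ)+1) - 2/((n:ℝ)+2) := by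
        rw [div_sub_div _ _ h1.ne' h2.ne', inv_eq_one_div,
          div_le_div_iff₀ (by positivity) (by positivity)]
        ring_nf
        nlinarith [sq_nonneg ((n:ℝ)+1)]
      have : ((n:ℝ)+1) + 1 = (n:ℝ) + 2 := by ring
      rw [this]
      linarith
  refine (h N).trans ?_
  have : (0:ℝ) ≤ 2/((N:ℝ)+1) := by positivity
  linarith

lemma my_sum_pow_le {a b N : ℕ} (hab : b + 1 ≤ a) {T : ℝ} (hT : 0 ≤ T) :
    ∑ x ∈ (Finset.Icc 1 N).filter (fun x : ℕ => ((x:ℝ))^a ≤ T), ((x:ℝ))^b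
      ≤ T ^ (((b:ℝ)+1)/(a:ℝ)) := by
  have ha0 : 0 < a := lt_of_lt_of_le (Nat.succ_pos b) hab
  have hTa : (0:ℝ) ≤ T ^ ((a:ℝ))⁻¹ := Real.rpow_nonneg hT _
  set K := ⌊T ^ ((a:ℝ))⁻¹⌋₊ with hK
  have hsub : (Finset.Icc 1 N).filter (fun x : ℕ => ((x:ℝ))^a ≤ T) ⊆ Finset.Icc 1 K := by
    intro x hx
    rw [Finset.mem_filter] at hx
    obtain ⟨hx1, hx2⟩ := hx
    rw [Finset.mem_Icc] at hx1 ⊢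
    refine ⟨hx1.1, ?_⟩
    have h3 : (((x:ℝ))^a)^((a:ℝ))⁻¹ ≤ T^((a:ℝ))⁻¹ :=
      Real.rpow_le_rpow (by positivity) hx2 (by positivity)
    have h4 : (((x:ℝ))^a)^((a:ℝ))⁻¹ = (x:ℝ) := by
      rw [← Real.rpow_natCast (x:ℝ) a, ← Real.rpow_mul (by positivity),
        mul_inv_cancel₀ (by exact_mod_cast ha0.ne'), Real.rpow_one]
    rw [h4] at h3
    exact Nat.le_floor h3
  have hKle : (K:ℝ) ≤ T ^ ((a:ℝ))⁻¹ := Nat.floor_le hTa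
  calc ∑ x ∈ (Finset.Icc 1 N).filter (fun x : ℕ => ((x:ℝ))^a ≤ T), ((x:ℝ))^b
      ≤ ∑ x ∈ Finset.Icc 1 K, ((x:ℝ))^b :=
        Finset.sum_le_sum_of_subset_of_nonneg hsub (fun x _ _ => by positivity)
    _ ≤ ∑ x ∈ Finset.Icc 1 K, ((K:ℝ))^b := by
        refine Finset.sum_le_sum (fun x hx => ?_)
        rw [Finset.mem_Icc] at hx
        exact pow_le_pow_left₀ (by positivity) (by exact_mod_cast hx.2) b
    _ = (K:ℝ) * ((K:ℝ))^b := by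
        rw [Finset.sum_const, Nat.card_Icc]
        simp [nsmul_eq_mul]
    _ = ((K:ℝ))^(b+1) := by ring
    _ ≤ (T ^ ((a:ℝ))⁻¹)^(b+1) := pow_le_pow_left₀ (by positivity) hKle _
    _ = T ^ (((b:ℝ)+1)/(a:ℝ)) := by
        rw [← Real.rpow_natCast (T ^ ((a:ℝ))⁻¹) (b+1), ← Real.rpow_mul hT]
        congr 1
        push_cast
        field_simp

lemma my_sum_pow_le' {a N : ℕ} (ha : 1 ≤ a) {T : ℝ} (hT : 0 ≤ T) :
    ∑ x ∈ (Finset.Icc 1 N).filter (fun x : ℕ => ((x:ℝ))^a ≤ T), ((x:ℝ))^(a-1) ≤ T := by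
  have h := my_sum_pow_le (a := a) (b := a - 1) (N := N) (by omega) hT
  have e1 : ((a-1:ℕ):ℝ) + 1 = (a:ℝ) := by
    rw [Nat.cast_sub ha]; push_cast; ring
  rw [e1, div_self (by exact_mod_cast (by omega : a ≠ 0)), Real.rpow_one] at h
  exact h
lemma my_log_facts {B : ℝ} (hB : 3 < B) : 1 < Real.log B ∧ Real.log B ≤ B := by
  constructor
  · have h2 : Real.exp 1 < B := by
      have := Real.exp_one_lt_d9; linarith
    calc 1 = Real.log (Real.exp 1) := (Real.log_exp 1).symm
      _ < Real.log B := Real.log_lt_log (Real.exp_pos 1) h2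
  · have := Real.log_le_sub_one_of_pos (show (0:ℝ) < B by linarith)
    linarith

lemma my_harm {B : ℝ} (hB : 3 < B) :
    ∑ x ∈ Finset.Icc 1 ⌊B⌋₊, ((x:ℝ))⁻¹ ≤ 2 * Real.log B := by
  have hB0 : (0:ℝ) < B := by linarith
  have hlog := (my_log_facts hB).1
  have hN : Real.log ⌊B⌋₊ ≤ Real.log B := by
    rcases Nat.eq_zero_or_pos ⌊B⌋₊ with h | h
    · rw [h]; simp; linarith
    · exact Real.log_le_log (by exact_mod_cast h) (Nat.floor_le hB0.le)
  have := my_sum_inv_le ⌊B⌋₊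
  linarith

lemma my_logsq {B : ℝ} (hB : 3 < B) : Real.log B ^ 2 ≤ 4 * B := by
  have hB0 : (0:ℝ) < B := by linarith
  have hs : Real.log B = 2 * Real.log (Real.sqrt B) := by
    rw [Real.log_sqrt hB0.le]; ring
  have h1 : Real.log (Real.sqrt B) ≤ Real.sqrt B :=
    (Real.log_le_sub_one_of_pos (Real.sqrt_pos.mpr hB0)).trans (by linarith)
  have h2 : (0:ℝ) ≤ Real.log (Real.sqrt B) :=
    Real.log_nonneg (Real.one_le_sqrt.mpr (by linarith))
  have h3 : Real.sqrt B ^ 2 = B := Real.sq_sqrt hB0.le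
  nlinarith [Real.sqrt_nonneg B]
lemma myCaseA (r : ℕ) (a : Fin r → ℕ) (i0 j : Fin r) (hji : j ≠ i0)
    (haj : 1 ≤ a j) (B : ℝ) (hB : 3 < B) :
    (∑ X ∈ (Fintype.piFinset fun _ : Fin r => Finset.Icc 1 ⌊B⌋₊).filter
        (fun X => (∏ i, ((X i : ℝ)) ^ (a i)) ≤ B),
      (X i0 : ℝ) ^ ((a i0 : ℝ) - 2) *
        ∏ i ∈ Finset.univ.erase i0, (X i : ℝ) ^ ((a i : ℝ) - 1))
    ≤ 2 ^ (r + 1) * B * Real.log B ^ (r - 2) := by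
  classical
  have hB0 : (0:ℝ) < B := by linarith
  have hlog1 : 1 < Real.log B := (my_log_facts hB).1
  have hharm := my_harm hB
  set N := ⌊B⌋₊ with hNdef
  have h1N : 1 ≤ N := Nat.le_floor (by norm_num; linarith)
  set G : Fin r → ℕ → ℝ := fun i x =>
    if i = i0 then ((x:ℝ))^(a i) / ((x:ℝ))^2 else ((x:ℝ))^(a i) / (x:ℝ) with hG
  set H : Fin r → ℕ → ℝ := fun i x =>
    if i = j then (if x = 1 then (1:ℝ) else 0)
    else if i = i0 then (((x:ℝ))^2)⁻¹ else ((x:ℝ))⁻¹ with hH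
  have hGnn : ∀ i x, 0 ≤ G i x := by
    intro i x; simp only [hG]; split <;> positivity
  have hHnn : ∀ i x, 0 ≤ H i x := by
    intro i x; simp only [hH]
    split
    · split <;> norm_num
    · split <;> positivity
  set P := Fintype.piFinset fun _ : Fin r => Finset.Icc 1 N with hP
  set A := P.filter (fun X => (∏ i, ((X i : ℝ)) ^ (a i)) ≤ B) with hAdef
  have hmemP : ∀ X ∈ P, ∀ i, 1 ≤ X i := by
    intro X hX i
    rw [hP, Fintype.mem_piFinset] at hX
    exact (Finset.mem_Icc.mp (hX i)).1
  have hsummand : ∀ X ∈ A, (X i0 : ℝ) ^ ((a i0 : ℝ) - 2) *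
      ∏ i ∈ Finset.univ.erase i0, (X i : ℝ) ^ ((a i : ℝ) - 1) = ∏ i, G i (X i) := by
    intro X hX
    have hX1 : ∀ i, 1 ≤ X i := hmemP X (Finset.mem_filter.mp hX).1
    have e := Finset.mul_prod_erase Finset.univ (fun i => G i (X i)) (Finset.mem_univ i0)
    rw [← e]
    congr 1
    · simp only [hG, if_pos rfl]
      have hx : (0:ℝ) < X i0 := by exact_mod_cast hX1 i0
      rw [show ((a i0:ℝ) - 2) = (a i0:ℝ) - ((2:ℕ):ℝ) by norm_num,
        Real.rpow_sub hx, Real.rpow_natCast, Real.rpow_natCast]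
    · refine Finset.prod_congr rfl (fun i hi => ?_)
      simp only [hG, if_neg (Finset.ne_of_mem_erase hi)]
      have hx : (0:ℝ) < X i := by exact_mod_cast hX1 i
      rw [show ((a i:ℝ) - 1) = (a i:ℝ) - ((1:ℕ):ℝ) by norm_num,
        Real.rpow_sub hx, Real.rpow_natCast, Real.rpow_natCast, pow_one]
  have hmaps : ∀ X ∈ A, Function.update X j 1 ∈ P := by
    intro X hX
    rw [hP, Fintype.mem_piFinset]
    intro i
    by_cases hij : i = j
    · subst hij; rw [Function.update_self]
      exact Finset.mem_Icc.mpr ⟨le_refl 1, h1N⟩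
    · rw [Function.update_of_ne hij]
      have h := (Finset.mem_filter.mp hX).1
      rw [hP, Fintype.mem_piFinset] at h
      exact h i
  have key : ∀ Y ∈ P,
      (∑ X ∈ A.filter (fun X => Function.update X j 1 = Y), ∏ i, G i (X i))
        ≤ B * ∏ i, H i (Y i) := by
    intro Y hY
    by_cases hYj : Y j = 1
    · have hY1 : ∀ i, 1 ≤ Y i := hmemP Y hY
      set Q : ℝ := ∏ i ∈ Finset.univ.erase j, ((Y i:ℝ))^(a i) with hQdef
      have hQ0 : (0:ℝ) < Q :=
        Finset.prod_pos (fun i _ => pow_pos (by exact_mod_cast hY1 i) _)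
      have hfibeq : ∀ X ∈ A.filter (fun X => Function.update X j 1 = Y),
          ∀ i, i ≠ j → X i = Y i := by
        intro X hX i hij
        have hupd := (Finset.mem_filter.mp hX).2
        rw [← hupd, Function.update_of_ne hij]
      have step1 : ∑ X ∈ A.filter (fun X => Function.update X j 1 = Y), ∏ i, G i (X i)
          = (∑ X ∈ A.filter (fun X => Function.update X j 1 = Y), G j (X j)) *
              ∏ i ∈ Finset.univ.erase j, G i (Y i) := by
        rw [Finset.sum_mul]
        refine Finset.sum_congr rfl (fun X hX => ?_)
        have e := Finset.mul_prod_erase Finset.univ (fun i => G i (X i)) (Finset.mem_univ j)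
        rw [← e]
        beta_reduce
        congr 1
        exact Finset.prod_congr rfl
          (fun i hi => by rw [hfibeq X hX i (Finset.ne_of_mem_erase hi)])
      have step2 : (∑ X ∈ A.filter (fun X => Function.update X j 1 = Y), G j (X j))
          ≤ B / Q := by
        have himg : ∑ x ∈ (A.filter (fun X => Function.update X j 1 = Y)).image
            (fun X => X j), G j x
            = ∑ X ∈ A.filter (fun X => Function.update X j 1 = Y), G j (X j) := by
          refine Finset.sum_image ?_
          intro X1 h1 X2 h2 hXj
          funext i
          by_cases hij : i = j
          · subst hij; exact hXj
          · rw [hfibeq X1 h1 i hij, hfibeq X2 h2 i hij]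
        rw [← himg]
        have hsub : (A.filter (fun X => Function.update X j 1 = Y)).image (fun X => X j)
            ⊆ (Finset.Icc 1 N).filter (fun x : ℕ => ((x:ℝ))^(a j) ≤ B / Q) := by
          intro x hx
          obtain ⟨X, hXmem, hXj⟩ := Finset.mem_image.mp hx
          have hXA := (Finset.mem_filter.mp hXmem).1
          have hXP := (Finset.mem_filter.mp hXA).1
          have hcon : ∏ i, ((X i:ℝ))^(a i) ≤ B := (Finset.mem_filter.mp hXA).2
          have e := Finset.mul_prod_erase Finset.univ (fun i => ((X i:ℝ))^(a i))
            (Finset.mem_univ j)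
          rw [← e] at hcon
          have hQeq : ∏ i ∈ Finset.univ.erase j, ((X i:ℝ))^(a i) = Q := by
            rw [hQdef]
            exact Finset.prod_congr rfl
              (fun i hi => by rw [hfibeq X hXmem i (Finset.ne_of_mem_erase hi)])
          rw [hQeq] at hcon
          rw [Finset.mem_filter]
          constructor
          · rw [hP, Fintype.mem_piFinset] at hXP
            rw [← hXj]; exact hXP j
          · rw [← hXj]
            exact (le_div_iff₀ hQ0).mpr hcon
        calc (∑ x ∈ (A.filter (fun X => Function.update X j 1 = Y)).image (fun X => X j),
              G j x)
            ≤ ∑ x ∈ (Finset.Icc 1 N).filter (fun x : ℕ => ((x:ℝ))^(a j) ≤ B / Q),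
              G j x := by
              exact Finset.sum_le_sum_of_subset_of_nonneg hsub (fun x _ _ => hGnn j x)
          _ = ∑ x ∈ (Finset.Icc 1 N).filter (fun x : ℕ => ((x:ℝ))^(a j) ≤ B / Q),
              ((x:ℝ))^(a j - 1) := by
              refine Finset.sum_congr rfl (fun x hx => ?_)
              have hx1 : 1 ≤ x := (Finset.mem_Icc.mp (Finset.mem_filter.mp hx).1).1
              have hx0 : (0:ℝ) < x := by exact_mod_cast hx1
              simp only [hG, if_neg hji]
              have hpow : ((x:ℝ))^(a j) = ((x:ℝ))^(a j - 1) * (x:ℝ) := by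
                rw [← pow_succ]; congr 1; omega
              rw [hpow, mul_div_cancel_right₀ _ hx0.ne']
          _ ≤ B / Q := my_sum_pow_le' haj (div_nonneg hB0.le hQ0.le)
      have step3 : (B / Q) * ∏ i ∈ Finset.univ.erase j, G i (Y i)
          = B * ∏ i, H i (Y i) := by
        have e := Finset.mul_prod_erase Finset.univ (fun i => H i (Y i)) (Finset.mem_univ j)
        rw [← e]
        beta_reduce
        have hHj : H j (Y j) = 1 := by simp [hH, hYj]
        rw [hHj, one_mul, div_mul_eq_mul_div, mul_div_assoc]
        congr 1
        rw [hQdef, ← Finset.prod_div_distrib]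
        refine Finset.prod_congr rfl (fun i hi => ?_)
        have hij : i ≠ j := Finset.ne_of_mem_erase hi
        have hy0 : (0:ℝ) < (Y i:ℝ) := by exact_mod_cast hY1 i
        by_cases hii : i = i0
        · subst hii
          simp only [hG, hH, if_pos, if_neg hij, eq_self_iff_true, if_true]
          rw [div_right_comm, div_self (by positivity), one_div]
        · simp only [hG, hH, if_neg hii, if_neg hij]
          rw [div_right_comm, div_self (by positivity), one_div]
      calc (∑ X ∈ A.filter (fun X => Function.update X j 1 = Y), ∏ i, G i (X i))
          = (∑ X ∈ A.filter (fun X => Function.update X j 1 = Y), G j (X j)) *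
              ∏ i ∈ Finset.univ.erase j, G i (Y i) := step1
        _ ≤ (B / Q) * ∏ i ∈ Finset.univ.erase j, G i (Y i) := by
            exact mul_le_mul_of_nonneg_right step2
              (Finset.prod_nonneg (fun i _ => hGnn i (Y i)))
        _ = B * ∏ i, H i (Y i) := step3
    · have hempty : A.filter (fun X => Function.update X j 1 = Y) = ∅ := by
        rw [Finset.filter_eq_empty_iff]
        intro X _ hupd
        exact hYj (by rw [← hupd, Function.update_self])
      rw [hempty, Finset.sum_empty]
      exact mul_nonneg hB0.le (Finset.prod_nonneg (fun i _ => hHnn i (Y i)))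
  have hSnn : ∀ i : Fin r, 0 ≤ ∑ x ∈ Finset.Icc 1 N, H i x :=
    fun i => Finset.sum_nonneg (fun x _ => hHnn i x)
  have hi0mem : i0 ∈ Finset.univ.erase j :=
    Finset.mem_erase.mpr ⟨Ne.symm hji, Finset.mem_univ i0⟩
  have hprod : ∏ i, ∑ x ∈ Finset.Icc 1 N, H i x ≤ 2 * (2 * Real.log B) ^ (r - 2) := by
    have e := Finset.mul_prod_erase Finset.univ
      (fun i => ∑ x ∈ Finset.Icc 1 N, H i x) (Finset.mem_univ j)
    rw [← e]
    beta_reduce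
    have hSj : ∑ x ∈ Finset.Icc 1 N, H j x = 1 := by
      simp only [hH, eq_self_iff_true, if_true]
      rw [Finset.sum_ite_eq' (Finset.Icc 1 N) 1 (fun _ => (1:ℝ))]
      simp [Finset.mem_Icc, h1N]
    rw [hSj, one_mul]
    have e2 := Finset.mul_prod_erase (Finset.univ.erase j)
      (fun i => ∑ x ∈ Finset.Icc 1 N, H i x) hi0mem
    rw [← e2]
    beta_reduce
    have hSi0 : ∑ x ∈ Finset.Icc 1 N, H i0 x ≤ 2 := by
      simp only [hH, if_neg (Ne.symm hji), eq_self_iff_true, if_true]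
      exact my_sum_inv_sq_le N
    have hrest : ∏ i ∈ (Finset.univ.erase j).erase i0, (∑ x ∈ Finset.Icc 1 N, H i x)
        ≤ (2 * Real.log B) ^ (r - 2) := by
      have hcard : ((Finset.univ.erase j).erase i0).card = r - 2 := by
        rw [Finset.card_erase_of_mem hi0mem, Finset.card_erase_of_mem (Finset.mem_univ j),
          Finset.card_univ, Fintype.card_fin]
        omega
      calc (∏ i ∈ (Finset.univ.erase j).erase i0, (∑ x ∈ Finset.Icc 1 N, H i x))
          ≤ (∏ _i ∈ (Finset.univ.erase j).erase i0, (2 * Real.log B)) := by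
            refine Finset.prod_le_prod (fun i _ => hSnn i) (fun i hi => ?_)
            have hii0 : i ≠ i0 := Finset.ne_of_mem_erase hi
            have hij : i ≠ j := Finset.ne_of_mem_erase (Finset.mem_of_mem_erase hi)
            calc (∑ x ∈ Finset.Icc 1 N, H i x)
                = ∑ x ∈ Finset.Icc 1 N, ((x:ℝ))⁻¹ := by
                  refine Finset.sum_congr rfl (fun x _ => ?_)
                  simp only [hH, if_neg hij, if_neg hii0]
              _ ≤ 2 * Real.log B := hharm
        _ = (2 * Real.log B) ^ (r - 2) := by rw [Finset.prod_const, hcard]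
    exact mul_le_mul hSi0 hrest
      (Finset.prod_nonneg (fun i _ => hSnn i)) (by norm_num)
  calc (∑ X ∈ A, (X i0 : ℝ) ^ ((a i0 : ℝ) - 2) *
        ∏ i ∈ Finset.univ.erase i0, (X i : ℝ) ^ ((a i : ℝ) - 1))
      = ∑ X ∈ A, ∏ i, G i (X i) := Finset.sum_congr rfl hsummand
    _ = ∑ Y ∈ P, ∑ X ∈ A.filter (fun X => Function.update X j 1 = Y), ∏ i, G i (X i) := by
        exact (Finset.sum_fiberwise_of_maps_to hmaps _).symm
    _ ≤ ∑ Y ∈ P, B * ∏ i, H i (Y i) := Finset.sum_le_sum key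
    _ = B * ∑ Y ∈ P, ∏ i, H i (Y i) := by rw [← Finset.mul_sum]
    _ = B * ∏ i, ∑ x ∈ Finset.Icc 1 N, H i x := by
        rw [hP, Finset.sum_prod_piFinset]
    _ ≤ B * (2 * (2 * Real.log B) ^ (r - 2)) := by
        exact mul_le_mul_of_nonneg_left hprod hB0.le
    _ ≤ 2 ^ (r + 1) * B * Real.log B ^ (r - 2) := by
        have h1 : (2:ℝ) * (2 * Real.log B) ^ (r - 2)
            = 2 ^ (r - 2 + 1) * Real.log B ^ (r - 2) := by
          rw [mul_pow, pow_succ]; ring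
        rw [h1]
        have h2 : (2:ℝ) ^ (r - 2 + 1) ≤ 2 ^ (r + 1) :=
          pow_le_pow_right₀ (by norm_num) (by omega)
        have h3 : (0:ℝ) ≤ Real.log B ^ (r - 2) := by positivity
        calc B * (2 ^ (r - 2 + 1) * Real.log B ^ (r - 2))
            ≤ B * (2 ^ (r + 1) * Real.log B ^ (r - 2)) := by
              refine mul_le_mul_of_nonneg_left ?_ hB0.le
              exact mul_le_mul_of_nonneg_right h2 h3
          _ = 2 ^ (r + 1) * B * Real.log B ^ (r - 2) := by ring
lemma myCaseB (r : ℕ) (hr : 2 ≤ r) (a : Fin r → ℕ) (i0 : Fin r)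
    (hz : ∀ i, i ≠ i0 → a i = 0) (B : ℝ) (hB : 3 < B) :
    (∑ X ∈ (Fintype.piFinset fun _ : Fin r => Finset.Icc 1 ⌊B⌋₊).filter
        (fun X => (∏ i, ((X i : ℝ)) ^ (a i)) ≤ B),
      (X i0 : ℝ) ^ ((a i0 : ℝ) - 2) *
        ∏ i ∈ Finset.univ.erase i0, (X i : ℝ) ^ ((a i : ℝ) - 1))
    ≤ ((a i0 : ℝ) + 8) * 2 ^ (r - 1) * B * Real.log B ^ (r - 2) := by
  classical
  have hB0 : (0:ℝ) < B := by linarith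
  have hlog1 : 1 < Real.log B := (my_log_facts hB).1
  have hlogB : Real.log B ≤ B := (my_log_facts hB).2
  have hlogsq : Real.log B ^ 2 ≤ 4 * B := my_logsq hB
  have hharm := my_harm hB
  set N := ⌊B⌋₊ with hNdef
  have h1N : 1 ≤ N := Nat.le_floor (by norm_num; linarith)
  set G : Fin r → ℕ → ℝ := fun i x =>
    if i = i0 then (if ((x:ℝ))^(a i0) ≤ B then ((x:ℝ))^(a i0) / ((x:ℝ))^2 else 0)
    else ((x:ℝ))⁻¹ with hG
  have hGnn : ∀ i x, 0 ≤ G i x := by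
    intro i x; simp only [hG]
    split
    · split <;> positivity
    · positivity
  set P := Fintype.piFinset fun _ : Fin r => Finset.Icc 1 N with hP
  set A := P.filter (fun X => (∏ i, ((X i : ℝ)) ^ (a i)) ≤ B) with hAdef
  have hmemP : ∀ X ∈ P, ∀ i, 1 ≤ X i := by
    intro X hX i
    rw [hP, Fintype.mem_piFinset] at hX
    exact (Finset.mem_Icc.mp (hX i)).1
  have hsummand : ∀ X ∈ A, (X i0 : ℝ) ^ ((a i0 : ℝ) - 2) *
      ∏ i ∈ Finset.univ.erase i0, (X i : ℝ) ^ ((a i : ℝ) - 1) = ∏ i, G i (X i) := by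
    intro X hX
    have hX1 : ∀ i, 1 ≤ X i := hmemP X (Finset.mem_filter.mp hX).1
    have hcon : ∏ i, ((X i:ℝ))^(a i) ≤ B := (Finset.mem_filter.mp hX).2
    have hconeq : ∏ i, ((X i:ℝ))^(a i) = ((X i0:ℝ))^(a i0) := by
      have e := Finset.mul_prod_erase Finset.univ (fun i => ((X i:ℝ))^(a i))
        (Finset.mem_univ i0)
      rw [← e]
      beta_reduce
      have h1 : ∏ i ∈ Finset.univ.erase i0, ((X i:ℝ))^(a i) = 1 := by
        refine Finset.prod_eq_one (fun i hi => ?_)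
        rw [hz i (Finset.ne_of_mem_erase hi), pow_zero]
      rw [h1, mul_one]
    rw [hconeq] at hcon
    have e := Finset.mul_prod_erase Finset.univ (fun i => G i (X i)) (Finset.mem_univ i0)
    rw [← e]
    beta_reduce
    congr 1
    · simp only [hG, if_pos rfl, if_pos hcon]
      have hx : (0:ℝ) < X i0 := by exact_mod_cast hX1 i0
      rw [show ((a i0:ℝ) - 2) = (a i0:ℝ) - ((2:ℕ):ℝ) by norm_num,
        Real.rpow_sub hx, Real.rpow_natCast, Real.rpow_natCast]
    · refine Finset.prod_congr rfl (fun i hi => ?_)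
      simp only [hG, if_neg (Finset.ne_of_mem_erase hi)]
      rw [hz i (Finset.ne_of_mem_erase hi), Nat.cast_zero, zero_sub, Real.rpow_neg_one]
  have hlogpos : (0:ℝ) < Real.log B := by linarith
  have h8 : (0:ℝ) ≤ (a i0:ℝ) := by positivity
  have hF : ∑ x ∈ Finset.Icc 1 N, G i0 x ≤ ((a i0:ℝ) + 8) * (B / Real.log B) := by
    have hFeq : ∑ x ∈ Finset.Icc 1 N, G i0 x
        = ∑ x ∈ (Finset.Icc 1 N).filter (fun x : ℕ => ((x:ℝ))^(a i0) ≤ B),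
            ((x:ℝ))^(a i0) / ((x:ℝ))^2 := by
      rw [Finset.sum_filter]
      refine Finset.sum_congr rfl (fun x _ => ?_)
      simp only [hG, if_pos rfl]
    rw [hFeq, ← mul_div_assoc, le_div_iff₀ hlogpos]
    by_cases h0 : a i0 = 0
    · have hb : ∑ x ∈ (Finset.Icc 1 N).filter (fun x : ℕ => ((x:ℝ))^(a i0) ≤ B),
          ((x:ℝ))^(a i0) / ((x:ℝ))^2 ≤ 2 := by
        have heq : ∀ x ∈ (Finset.Icc 1 N).filter (fun x : ℕ => ((x:ℝ))^(a i0) ≤ B),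
            ((x:ℝ))^(a i0) / ((x:ℝ))^2 = (((x:ℝ))^2)⁻¹ := by
          intro x _
          rw [h0, pow_zero, one_div]
        rw [Finset.sum_congr rfl heq]
        refine le_trans (Finset.sum_le_sum_of_subset_of_nonneg
          (Finset.filter_subset _ _) (fun x _ _ => by positivity)) ?_
        exact my_sum_inv_sq_le N
      refine le_trans (mul_le_mul_of_nonneg_right hb hlogpos.le) ?_
      nlinarith [mul_nonneg h8 hB0.le]
    · by_cases h1 : a i0 = 1
      · have hb : ∑ x ∈ (Finset.Icc 1 N).filter (fun x : ℕ => ((x:ℝ))^(a i0) ≤ B),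
            ((x:ℝ))^(a i0) / ((x:ℝ))^2 ≤ 2 * Real.log B := by
          have heq : ∀ x ∈ (Finset.Icc 1 N).filter (fun x : ℕ => ((x:ℝ))^(a i0) ≤ B),
              ((x:ℝ))^(a i0) / ((x:ℝ))^2 = ((x:ℝ))⁻¹ := by
            intro x hx
            have hx1 : 1 ≤ x := (Finset.mem_Icc.mp (Finset.mem_filter.mp hx).1).1
            have hx0 : (0:ℝ) < x := by exact_mod_cast hx1
            rw [h1, pow_one, sq]
            field_simp
          rw [Finset.sum_congr rfl heq]
          refine le_trans (Finset.sum_le_sum_of_subset_of_nonneg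
            (Finset.filter_subset _ _) (fun x _ _ => by positivity)) hharm
        refine le_trans (mul_le_mul_of_nonneg_right hb hlogpos.le) ?_
        nlinarith [mul_nonneg h8 hB0.le]
      · have h2 : 2 ≤ a i0 := by omega
        have hb : ∑ x ∈ (Finset.Icc 1 N).filter (fun x : ℕ => ((x:ℝ))^(a i0) ≤ B),
            ((x:ℝ))^(a i0) / ((x:ℝ))^2
            ≤ B ^ ((((a i0 - 2 : ℕ):ℝ)+1)/((a i0:ℕ):ℝ)) := by
          have heq : ∀ x ∈ (Finset.Icc 1 N).filter (fun x : ℕ => ((x:ℝ))^(a i0) ≤ B),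
              ((x:ℝ))^(a i0) / ((x:ℝ))^2 = ((x:ℝ))^(a i0 - 2) := by
            intro x hx
            have hx1 : 1 ≤ x := (Finset.mem_Icc.mp (Finset.mem_filter.mp hx).1).1
            have hx0 : (0:ℝ) < x := by exact_mod_cast hx1
            have hpow : ((x:ℝ))^(a i0) = ((x:ℝ))^(a i0 - 2) * ((x:ℝ))^2 := by
              rw [← pow_add]; congr 1; omega
            rw [hpow, mul_div_cancel_right₀ _ (by positivity)]
          rw [Finset.sum_congr rfl heq]
          exact my_sum_pow_le (by omega) hB0.le
        refine le_trans (mul_le_mul_of_nonneg_right hb hlogpos.le) ?_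
        have hane : ((a i0:ℕ):ℝ) ≠ 0 := by
          exact_mod_cast (by omega : a i0 ≠ 0)
        set u : ℝ := B ^ (((a i0:ℕ):ℝ))⁻¹ with hu
        have hu0 : (0:ℝ) < u := Real.rpow_pos_of_pos hB0 _
        have hue : B ^ ((((a i0 - 2 : ℕ):ℝ)+1)/((a i0:ℕ):ℝ)) = B / u := by
          rw [show (((a i0 - 2:ℕ):ℝ)+1)/((a i0:ℕ):ℝ) = 1 - (((a i0:ℕ):ℝ))⁻¹ by
            rw [Nat.cast_sub h2]; field_simp; ring]
          rw [Real.rpow_sub hB0, Real.rpow_one, hu]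
        have hlogle : Real.log B ≤ (a i0:ℝ) * u := by
          have hlu : Real.log u = (((a i0:ℕ):ℝ))⁻¹ * Real.log B := Real.log_rpow hB0 _
          have h5 : Real.log u ≤ u := by
            have := Real.log_le_sub_one_of_pos hu0; linarith
          have h6 : Real.log B = (a i0:ℝ) * Real.log u := by
            rw [hlu]; field_simp
          rw [h6]
          exact mul_le_mul_of_nonneg_left h5 h8
        rw [hue]
        have hune : u ≠ 0 := hu0.ne'
        refine le_trans (mul_le_mul_of_nonneg_left hlogle (by positivity)) ?_
        have he : B / u * ((a i0:ℝ) * u) = (a i0:ℝ) * B := by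
          field_simp
        rw [he]
        nlinarith [hB0.le]
  have hrest : ∏ i ∈ Finset.univ.erase i0, (∑ x ∈ Finset.Icc 1 N, G i x)
      ≤ (2 * Real.log B) ^ (r - 1) := by
    have hcard : (Finset.univ.erase i0).card = r - 1 := by
      rw [Finset.card_erase_of_mem (Finset.mem_univ i0), Finset.card_univ, Fintype.card_fin]
    calc (∏ i ∈ Finset.univ.erase i0, (∑ x ∈ Finset.Icc 1 N, G i x))
        ≤ (∏ _i ∈ Finset.univ.erase i0, (2 * Real.log B)) := by
          refine Finset.prod_le_prod
            (fun i _ => Finset.sum_nonneg (fun x _ => hGnn i x)) (fun i hi => ?_)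
          have heq : ∀ x ∈ Finset.Icc 1 N, G i x = ((x:ℝ))⁻¹ := by
            intro x _
            simp only [hG, if_neg (Finset.ne_of_mem_erase hi)]
          rw [Finset.sum_congr rfl heq]
          exact hharm
      _ = (2 * Real.log B) ^ (r - 1) := by rw [Finset.prod_const, hcard]
  have hfinal : (((a i0:ℝ) + 8) * (B / Real.log B)) * (2 * Real.log B) ^ (r - 1)
      = ((a i0 : ℝ) + 8) * 2 ^ (r - 1) * B * Real.log B ^ (r - 2) := by
    rw [mul_pow, show r - 1 = (r - 2) + 1 by omega, pow_succ, pow_succ]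
    have hlne : Real.log B ≠ 0 := by linarith
    field_simp
  calc (∑ X ∈ A, (X i0 : ℝ) ^ ((a i0 : ℝ) - 2) *
        ∏ i ∈ Finset.univ.erase i0, (X i : ℝ) ^ ((a i : ℝ) - 1))
      = ∑ X ∈ A, ∏ i, G i (X i) := Finset.sum_congr rfl hsummand
    _ ≤ ∑ X ∈ P, ∏ i, G i (X i) := by
        exact Finset.sum_le_sum_of_subset_of_nonneg (Finset.filter_subset _ _)
          (fun X _ _ => Finset.prod_nonneg (fun i _ => hGnn i (X i)))
    _ = ∏ i, ∑ x ∈ Finset.Icc 1 N, G i x := by rw [hP, Finset.sum_prod_piFinset]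
    _ = (∑ x ∈ Finset.Icc 1 N, G i0 x) *
          ∏ i ∈ Finset.univ.erase i0, (∑ x ∈ Finset.Icc 1 N, G i x) := by
        exact (Finset.mul_prod_erase Finset.univ
          (fun i => ∑ x ∈ Finset.Icc 1 N, G i x) (Finset.mem_univ i0)).symm
    _ ≤ (((a i0:ℝ) + 8) * (B / Real.log B)) * (2 * Real.log B) ^ (r - 1) := by
        exact mul_le_mul hF hrest
          (Finset.prod_nonneg (fun i _ => Finset.sum_nonneg (fun x _ => hGnn i x)))
          (by positivity)
    _ = ((a i0 : ℝ) + 8) * 2 ^ (r - 1) * B * Real.log B ^ (r - 2) := hfinal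
/-- Lemma `twospecsum2`: the sum of `X_{i0}^{a_{i0}-2} ∏_{i≠i0} Xᵢ^{aᵢ-1}` over positive
integer tuples with `∏ᵢ Xᵢ^{aᵢ} ≤ B` and `max Xᵢ ≤ B` is `O(B (log B)^{r-2})`. -/
theorem stmt_14 (r : ℕ) (hr : 2 ≤ r) (a : Fin r → ℕ) (i0 : Fin r) :
    ∃ C : ℝ, 0 < C ∧ ∀ B : ℝ, 3 < B →
      (∑ X ∈ (Fintype.piFinset fun _ : Fin r => Finset.Icc 1 ⌊B⌋₊).filter
          (fun X => (∏ i, ((X i : ℝ)) ^ (a i)) ≤ B),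
        (X i0 : ℝ) ^ ((a i0 : ℝ) - 2) *
          ∏ i ∈ Finset.univ.erase i0, (X i : ℝ) ^ ((a i : ℝ) - 1))
      ≤ C * B * (Real.log B) ^ (r - 2) := by
  classical
  refine ⟨2 ^ (r + 1) + ((a i0 : ℝ) + 8) * 2 ^ (r - 1), by positivity, fun B hB => ?_⟩
  have hB0 : (0:ℝ) < B := by linarith
  have hlog0 : (0:ℝ) ≤ Real.log B := Real.log_nonneg (by linarith)
  have hnn : (0:ℝ) ≤ B * Real.log B ^ (r - 2) := by positivity
  by_cases hcase : ∃ j, j ≠ i0 ∧ 1 ≤ a j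
  · obtain ⟨j, hji, haj⟩ := hcase
    refine le_trans (myCaseA r a i0 j hji haj B hB) ?_
    refine mul_le_mul_of_nonneg_right (mul_le_mul_of_nonneg_right ?_ hB0.le)
      (by positivity)
    have hc : (0:ℝ) ≤ ((a i0 : ℝ) + 8) * 2 ^ (r - 1) := by positivity
    linarith
  · push_neg at hcase
    have hz : ∀ i, i ≠ i0 → a i = 0 := by
      intro i hi
      have := hcase i hi
      omega
    refine le_trans (myCaseB r hr a i0 hz B hB) ?_
    refine mul_le_mul_of_nonneg_right (mul_le_mul_of_nonneg_right ?_ hB0.le)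
      (by positivity)
    have hc : (0:ℝ) ≤ (2:ℝ) ^ (r + 1) := by positivity
    linarith
end
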